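/- arXiv:2504.16701 — 15 statements merged into one kernel-verified Lean document; each statement's English description precedes it below -/
import Mathlib

section
/- Let d ≥ 1 and let U, F : ℝ → M_d(ℂ) be matrix-valued functions with F twice differentiable and U differentiable, satisfying the matrix Darboux condition U' + F'' = [U,F] + 2F'F. Let λ ∈ ℂ and let ψ : ℝ → ℂ^d be twice differentiable with ψ'' = (U − λI)ψ. Then the function ψ̃ := ψ' + Fψ is twice differentiable and satisfies ψ̃'' = (Ũ − λI)ψ̃, where Ũ := U + 2F'. -/
open Matrix

private lemma mulVec_hasDerivAt {d : ℕ} {M : ℝ → Matrix (Fin d) (Fin d) ℂ}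
    {M' : Matrix (Fin d) (Fin d) ℂ}
    {v : ℝ → Fin d → ℂ} {v' : Fin d → ℂ} {x : ℝ} (i : Fin d)
    (hM : ∀ i j, HasDerivAt (fun t => M t i j) (M' i j) x)
    (hv : ∀ j, HasDerivAt (fun t => v t j) (v' j) x) :
    HasDerivAt (fun t => (M t).mulVec (v t) i)
      ((M'.mulVec (v x) + (M x).mulVec v') i) x := by
  simp only [Matrix.mulVec, dotProduct, Pi.add_apply]
  rw [← Finset.sum_add_distrib]
  exact HasDerivAt.fun_sum fun j _ => (hM i j).mul (hv j)

/-- The elementary Darboux transformation `ψ̃ = ψ' + Fψ` maps solutions of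
`ψ'' = (U - λ)ψ` to solutions of `ψ̃'' = (Ũ - λ)ψ̃` with `Ũ = U + 2F'`, provided
`U' + F'' = [U,F] + 2F'F`. Derivatives are computed entrywise. -/
theorem darboux_transformation_of_matrix_schrodinger
    (d : ℕ) (hd : 1 ≤ d)
    (U U' F F' F'' : ℝ → Matrix (Fin d) (Fin d) ℂ)
    (hU : ∀ x i j, HasDerivAt (fun t => U t i j) (U' x i j) x)
    (hF : ∀ x i j, HasDerivAt (fun t => F t i j) (F' x i j) x)
    (hF' : ∀ x i j, HasDerivAt (fun t => F' t i j) (F'' x i j) x)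
    (hDarboux : ∀ x, U' x + F'' x
      = (U x * F x - F x * U x) + (2 : ℂ) • (F' x * F x))
    (lam : ℂ) (ψ ψ' ψ'' : ℝ → Fin d → ℂ)
    (hψ : ∀ x i, HasDerivAt (fun t => ψ t i) (ψ' x i) x)
    (hψ' : ∀ x i, HasDerivAt (fun t => ψ' t i) (ψ'' x i) x)
    (hSch : ∀ x, ψ'' x
      = (U x - lam • (1 : Matrix (Fin d) (Fin d) ℂ)).mulVec (ψ x)) :
    ∃ χ' χ'' : ℝ → Fin d → ℂ,
      (∀ x i, HasDerivAt (fun t => (ψ' t + (F t).mulVec (ψ t)) i) (χ' x i) x)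
      ∧ (∀ x i, HasDerivAt (fun t => χ' t i) (χ'' x i) x)
      ∧ (∀ x, χ'' x
          = ((U x + (2 : ℂ) • F' x) - lam • (1 : Matrix (Fin d) (Fin d) ℂ)).mulVec
              (ψ' x + (F x).mulVec (ψ x))) := by
  have hψ''d : ∀ x i, HasDerivAt (fun t => ψ'' t i)
      (((U' x).mulVec (ψ x)
        + (U x - lam • (1 : Matrix (Fin d) (Fin d) ℂ)).mulVec (ψ' x)) i) x := by
    intro x i
    have heq : (fun t => ψ'' t i)
        = fun t => (U t - lam • (1 : Matrix (Fin d) (Fin d) ℂ)).mulVec (ψ t) i := by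
      funext t; rw [hSch t]
    rw [heq]
    exact mulVec_hasDerivAt i (fun i j => ((hU x i j).sub_const _)) (fun j => hψ x j)
  refine ⟨fun x => ψ'' x + ((F' x).mulVec (ψ x) + (F x).mulVec (ψ' x)),
    fun x => ((U' x).mulVec (ψ x)
        + (U x - lam • (1 : Matrix (Fin d) (Fin d) ℂ)).mulVec (ψ' x))
      + ((F'' x).mulVec (ψ x) + (F' x).mulVec (ψ' x))
      + ((F' x).mulVec (ψ' x) + (F x).mulVec (ψ'' x)), ?_, ?_, ?_⟩
  · intro x i
    simpa using (hψ' x i).fun_add (mulVec_hasDerivAt i (hF x) (hψ x))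
  · intro x i
    simpa [add_assoc] using
      ((hψ''d x i).fun_add
        ((mulVec_hasDerivAt i (hF' x) (hψ x)).fun_add (mulVec_hasDerivAt i (hF x) (hψ' x))))
  · intro x
    have hD := hDarboux x
    simp only [hSch]
    have key : (U' x).mulVec (ψ x) + (F'' x).mulVec (ψ x)
        = ((U x * F x - F x * U x) + (2 : ℂ) • (F' x * F x)).mulVec (ψ x) := by
      rw [← Matrix.add_mulVec, hD]
    simp only [Matrix.add_mulVec, Matrix.sub_mulVec, Matrix.smul_mulVec,
      Matrix.mulVec_add, Matrix.mulVec_sub, Matrix.mulVec_smul, ← Matrix.mulVec_mulVec, Matrix.one_mulVec] at key ⊢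
    linear_combination (norm := module) key
end

section
/- Let d ≥ 1, let U : ℝ → M_d(ℂ) be continuous, Λ ∈ M_d(ℂ) a constant matrix, and φ : ℝ → M_d(ℂ) twice differentiable with φ(x) invertible for every x and φ'' = Uφ − φΛ. Then the functions F := −φ'φ⁻¹ and B := φΛφ⁻¹ are differentiable and satisfy U = −F' + F² + B and B' = [B,F]. -/
open Matrix

private lemma entrywise_mul {d : ℕ} {A B : ℝ → Matrix (Fin d) (Fin d) ℂ}
    {A' B' : Matrix (Fin d) (Fin d) ℂ} {x : ℝ}
    (hA : ∀ i j, HasDerivAt (fun t => A t i j) (A' i j) x)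
    (hB : ∀ i j, HasDerivAt (fun t => B t i j) (B' i j) x)
    (i j : Fin d) :
    HasDerivAt (fun t => (A t * B t) i j) ((A' * B x + A x * B') i j) x := by
  have h : (fun t => (A t * B t) i j) = fun t => ∑ k, A t i k * B t k j :=
    funext fun t => Matrix.mul_apply
  have h2 : (A' * B x + A x * B') i j
      = ∑ k, (A' i k * B x k j + A x i k * B' k j) := by
    simp [Matrix.mul_apply, Matrix.add_apply, Finset.sum_add_distrib]
  rw [h, h2]
  exact HasDerivAt.fun_sum fun k _ => (hA i k).mul (hB k j)

private lemma diffAt_det {d : ℕ} {M : ℝ → Matrix (Fin d) (Fin d) ℂ} {x : ℝ}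
    (hM : ∀ i j, DifferentiableAt ℝ (fun t => M t i j) x) :
    DifferentiableAt ℝ (fun t => (M t).det) x := by
  simp only [Matrix.det_apply']
  exact DifferentiableAt.fun_sum fun σ _ =>
    (DifferentiableAt.fun_finsetProd (fun i _ => hM (σ i) i)).const_mul _

/-- If `φ'' = Uφ - φΛ` with `φ(x)` invertible everywhere, then
`F = -φ'φ⁻¹` and `B = φΛφ⁻¹` are differentiable and satisfy `U = -F' + F² + B`
and `B' = [B, F]`. Derivatives are computed entrywise. -/
theorem linearization_of_matrix_darboux_system
    (d : ℕ) (hd : 1 ≤ d)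
    (U : ℝ → Matrix (Fin d) (Fin d) ℂ)
    (hUcont : ∀ i j, Continuous fun x => U x i j)
    (Λ : Matrix (Fin d) (Fin d) ℂ)
    (φ φ' φ'' : ℝ → Matrix (Fin d) (Fin d) ℂ)
    (hφ : ∀ x i j, HasDerivAt (fun t => φ t i j) (φ' x i j) x)
    (hφ' : ∀ x i j, HasDerivAt (fun t => φ' t i j) (φ'' x i j) x)
    (hinv : ∀ x, IsUnit (φ x))
    (heq : ∀ x, φ'' x = U x * φ x - φ x * Λ) :
    ∃ F' B' : ℝ → Matrix (Fin d) (Fin d) ℂ,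
      (∀ x i j, HasDerivAt (fun t => (-(φ' t) * (φ t)⁻¹) i j) (F' x i j) x)
      ∧ (∀ x i j, HasDerivAt (fun t => (φ t * Λ * (φ t)⁻¹) i j) (B' x i j) x)
      ∧ (∀ x, U x = -(F' x) + (-(φ' x) * (φ x)⁻¹) ^ 2 + φ x * Λ * (φ x)⁻¹)
      ∧ (∀ x, B' x = (φ x * Λ * (φ x)⁻¹) * (-(φ' x) * (φ x)⁻¹)
            - (-(φ' x) * (φ x)⁻¹) * (φ x * Λ * (φ x)⁻¹)) := by
  have hdet : ∀ x, IsUnit (φ x).det := fun x =>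
    (Matrix.isUnit_iff_isUnit_det _).mp (hinv x)
  have hmi : ∀ x, φ x * (φ x)⁻¹ = 1 := fun x => Matrix.mul_nonsing_inv _ (hdet x)
  have him : ∀ x, (φ x)⁻¹ * φ x = 1 := fun x => Matrix.nonsing_inv_mul _ (hdet x)
  -- differentiability of the entries of the inverse
  have hψdiff : ∀ x i j, DifferentiableAt ℝ (fun t => (φ t)⁻¹ i j) x := by
    intro x i j
    have h1 : (fun t => (φ t)⁻¹ i j)
        = fun t => Ring.inverse (φ t).det * (φ t).adjugate i j := by
      funext t
      rw [Matrix.inv_def]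
      simp [Matrix.smul_apply, smul_eq_mul]
    rw [h1]
    have hdetd : DifferentiableAt ℝ (fun t => (φ t).det) x :=
      diffAt_det fun i j => (hφ x i j).differentiableAt
    have hdetinv : DifferentiableAt ℝ (fun t => Ring.inverse ((φ t).det)) x :=
      hdetd.inverse (hdet x)
    have hadj : DifferentiableAt ℝ (fun t => (φ t).adjugate i j) x := by
      simp only [Matrix.adjugate_apply]
      apply diffAt_det
      intro k l
      simp only [Matrix.updateRow_apply]
      split_ifs with h
      · exact differentiableAt_const _
      · exact (hφ x k l).differentiableAt
    exact hdetinv.mul hadj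
  -- the entrywise derivative of the inverse
  set D : ℝ → Matrix (Fin d) (Fin d) ℂ :=
    fun x => Matrix.of fun i j => deriv (fun t => (φ t)⁻¹ i j) x with hDdef
  have hD : ∀ x i j, HasDerivAt (fun t => (φ t)⁻¹ i j) (D x i j) x := fun x i j =>
    (hψdiff x i j).hasDerivAt
  have hzero : ∀ x, φ' x * (φ x)⁻¹ + φ x * D x = 0 := by
    intro x
    ext i j
    have hconst : HasDerivAt (fun t => (φ t * (φ t)⁻¹) i j) 0 x := by
      have h : (fun t => (φ t * (φ t)⁻¹) i j)
          = fun _ => (1 : Matrix (Fin d) (Fin d) ℂ) i j :=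
        funext fun t => by rw [hmi t]
      rw [h]
      exact hasDerivAt_const _ _
    have h1 := entrywise_mul (hφ x) (hD x) i j
    have h2 := h1.unique hconst
    simpa using h2
  have hDval : ∀ x, D x = -((φ x)⁻¹ * φ' x * (φ x)⁻¹) := by
    intro x
    have h1' : φ x * D x = -(φ' x * (φ x)⁻¹) := by
      have := hzero x
      have := eq_neg_of_add_eq_zero_right this
      exact this
    calc D x = ((φ x)⁻¹ * φ x) * D x := by rw [him x, one_mul]
      _ = (φ x)⁻¹ * (φ x * D x) := by rw [mul_assoc]
      _ = (φ x)⁻¹ * -(φ' x * (φ x)⁻¹) := by rw [h1']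
      _ = -((φ x)⁻¹ * φ' x * (φ x)⁻¹) := by noncomm_ring
  refine ⟨fun x => -(φ'' x) * (φ x)⁻¹ + φ' x * ((φ x)⁻¹ * φ' x * (φ x)⁻¹),
    fun x => φ' x * Λ * (φ x)⁻¹ - φ x * Λ * ((φ x)⁻¹ * φ' x * (φ x)⁻¹),
    ?_, ?_, ?_, ?_⟩
  · intro x i j
    have hA : ∀ i j, HasDerivAt (fun t => (-(φ' t)) i j) ((-(φ'' x)) i j) x :=
      fun i j => by simpa [Matrix.neg_apply] using (hφ' x i j).fun_neg
    have h := entrywise_mul hA (hD x) i j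
    have E : -(φ'' x) * (φ x)⁻¹ + φ' x * ((φ x)⁻¹ * φ' x * (φ x)⁻¹)
        = -(φ'' x) * (φ x)⁻¹ + -(φ' x) * D x := by
      rw [hDval x]; noncomm_ring
    simpa only [E] using h
  · intro x i j
    have hΛ : ∀ i j, HasDerivAt (fun t => Λ i j)
        ((0 : Matrix (Fin d) (Fin d) ℂ) i j) x := fun i j => by
      simpa using hasDerivAt_const x (Λ i j)
    have hA : ∀ i j, HasDerivAt (fun t => (φ t * Λ) i j) ((φ' x * Λ) i j) x := by
      intro i j
      have := entrywise_mul (B := fun _ => Λ) (hφ x) hΛ i j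
      simpa using this
    have h := entrywise_mul hA (hD x) i j
    have E : φ' x * Λ * (φ x)⁻¹ - φ x * Λ * ((φ x)⁻¹ * φ' x * (φ x)⁻¹)
        = φ' x * Λ * (φ x)⁻¹ + φ x * Λ * D x := by
      rw [hDval x]; noncomm_ring
    simpa only [E] using h
  · intro x
    have hU : U x = (U x * φ x - φ x * Λ) * (φ x)⁻¹ + φ x * Λ * (φ x)⁻¹ := by
      rw [sub_mul, sub_add_cancel, mul_assoc, hmi x, mul_one]
    rw [← heq x] at hU
    rw [hU]
    noncomm_ring
  · intro x
    have e : (-(φ' x) * (φ x)⁻¹) * (φ x * Λ * (φ x)⁻¹) = -(φ' x * Λ * (φ x)⁻¹) := by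
      have h1 : (-(φ' x) * (φ x)⁻¹) * (φ x * Λ * (φ x)⁻¹)
          = -(φ' x * ((φ x)⁻¹ * φ x) * (Λ * (φ x)⁻¹)) := by noncomm_ring
      rw [h1, him x, mul_one]
      noncomm_ring
    rw [e]
    noncomm_ring
end

section
/- Let d ≥ 1, let F : ℝ → M_d(ℂ) be twice differentiable and B : ℝ → M_d(ℂ) differentiable with B' = [B,F]. Set U := −F' + F² + B and Ũ := F' + F² + B. Then the intertwining relation A L = L̃ A holds on functions: for every three-times differentiable ψ : ℝ → ℂ^d one has (−ψ'' + Uψ)' + F·(−ψ'' + Uψ) = −(ψ' + Fψ)'' + Ũ·(ψ' + Fψ). -/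
open Matrix

private lemma hdA_mulVec {d : ℕ} {M : ℝ → Matrix (Fin d) (Fin d) ℂ}
    {M' : Matrix (Fin d) (Fin d) ℂ} {v : ℝ → Fin d → ℂ} {v' : Fin d → ℂ} {x : ℝ}
    (hM : ∀ i j, HasDerivAt (fun t => M t i j) (M' i j) x)
    (hv : ∀ j, HasDerivAt (fun t => v t j) (v' j) x) (i : Fin d) :
    HasDerivAt (fun t => (M t).mulVec (v t) i)
      (M'.mulVec (v x) i + (M x).mulVec v' i) x := by
  simp only [Matrix.mulVec, dotProduct]
  rw [← Finset.sum_add_distrib]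
  exact HasDerivAt.fun_sum fun j _ => (hM i j).mul (hv j)

/-- The intertwining relation `A L = L̃ A` on vector functions, where
`L = -D² + U`, `L̃ = -D² + Ũ`, `A = D + F`, `U = -F' + F² + B`, `Ũ = F' + F² + B`
and `B' = [B,F]`. Derivatives are computed entrywise. -/
theorem matrix_darboux_intertwining
    (d : ℕ) (hd : 1 ≤ d)
    (F F' F'' B B' : ℝ → Matrix (Fin d) (Fin d) ℂ)
    (hF : ∀ x i j, HasDerivAt (fun t => F t i j) (F' x i j) x)
    (hF' : ∀ x i j, HasDerivAt (fun t => F' t i j) (F'' x i j) x)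
    (hB : ∀ x i j, HasDerivAt (fun t => B t i j) (B' x i j) x)
    (hBeq : ∀ x, B' x = B x * F x - F x * B x)
    (ψ ψ' ψ'' ψ''' : ℝ → Fin d → ℂ)
    (hψ : ∀ x i, HasDerivAt (fun t => ψ t i) (ψ' x i) x)
    (hψ' : ∀ x i, HasDerivAt (fun t => ψ' t i) (ψ'' x i) x)
    (hψ'' : ∀ x i, HasDerivAt (fun t => ψ'' t i) (ψ''' x i) x) :
    ∀ x i,
      deriv (fun t => (-(ψ'' t) + (-(F' t) + (F t) ^ 2 + B t).mulVec (ψ t)) i) x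
        + ((F x).mulVec (-(ψ'' x) + (-(F' x) + (F x) ^ 2 + B x).mulVec (ψ x))) i
      = -(deriv (fun t => deriv (fun s => (ψ' s + (F s).mulVec (ψ s)) i) t) x)
        + ((F' x + (F x) ^ 2 + B x).mulVec (ψ' x + (F x).mulVec (ψ x))) i := by
  intro x i
  -- derivative of F^2 entrywise
  have hF2 : ∀ y (i j : Fin d), HasDerivAt (fun t => ((F t) ^ 2) i j)
      ((F' y * F y + F y * F' y) i j) y := by
    intro y i j
    simp only [sq, Matrix.mul_apply, Matrix.add_apply]
    rw [← Finset.sum_add_distrib]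
    exact HasDerivAt.fun_sum fun k _ => (hF y i k).mul (hF y k j)
  -- derivative of U = -F' + F^2 + B entrywise
  have hU : ∀ y (i j : Fin d), HasDerivAt (fun t => (-(F' t) + (F t) ^ 2 + B t) i j)
      ((-(F'' y) + (F' y * F y + F y * F' y) + B' y) i j) y := by
    intro y i j
    simp only [Matrix.add_apply, Matrix.neg_apply]
    exact ((hF' y i j).neg.add (hF2 y i j)).add (hB y i j)
  -- derivative of the LHS inner function
  have hL : HasDerivAt (fun t => (-(ψ'' t) + (-(F' t) + (F t) ^ 2 + B t).mulVec (ψ t)) i)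
      (-(ψ''' x i) + ((-(F'' x) + (F' x * F x + F x * F' x) + B' x).mulVec (ψ x) i
        + (-(F' x) + (F x) ^ 2 + B x).mulVec (ψ' x) i)) x := by
    have := (hψ'' x i).neg.add (hdA_mulVec (hU x) (fun j => hψ x j) i)
    exact this
  rw [hL.deriv]
  -- rewrite the inner derivative on the RHS
  have hfun : (fun t => deriv (fun s => (ψ' s + (F s).mulVec (ψ s)) i) t)
      = fun t => ψ'' t i + ((F' t).mulVec (ψ t) i + (F t).mulVec (ψ' t) i) := by
    funext t
    exact ((hψ' t i).add (hdA_mulVec (fun a b => hF t a b) (fun j => hψ t j) i)).deriv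
  rw [hfun]
  have hR : HasDerivAt (fun t => ψ'' t i + ((F' t).mulVec (ψ t) i + (F t).mulVec (ψ' t) i))
      (ψ''' x i + (((F'' x).mulVec (ψ x) i + (F' x).mulVec (ψ' x) i)
        + ((F' x).mulVec (ψ' x) i + (F x).mulVec (ψ'' x) i))) x :=
    (hψ'' x i).add ((hdA_mulVec (fun a b => hF' x a b) (fun j => hψ x j) i).add
      (hdA_mulVec (fun a b => hF x a b) (fun j => hψ' x j) i))
  rw [hR.deriv]
  -- now pure algebra; prove the vector identity and specialize
  have key : -(ψ''' x) + ((-(F'' x) + (F' x * F x + F x * F' x) + B' x).mulVec (ψ x)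
        + (-(F' x) + (F x) ^ 2 + B x).mulVec (ψ' x))
      + (F x).mulVec (-(ψ'' x) + (-(F' x) + (F x) ^ 2 + B x).mulVec (ψ x))
      = -(ψ''' x + (((F'' x).mulVec (ψ x) + (F' x).mulVec (ψ' x))
        + ((F' x).mulVec (ψ' x) + (F x).mulVec (ψ'' x))))
      + (F' x + (F x) ^ 2 + B x).mulVec (ψ' x + (F x).mulVec (ψ x)) := by
    rw [hBeq]
    simp only [sq, Matrix.add_mulVec, Matrix.sub_mulVec, Matrix.neg_mulVec,
      Matrix.mulVec_add, Matrix.mulVec_neg, Matrix.mulVec_mulVec, Matrix.mul_add,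
      Matrix.add_mul, Matrix.mul_neg, Matrix.neg_mul, mul_assoc]
    abel
  have hkey := congrFun key i
  simp only [Pi.add_apply, Pi.neg_apply] at hkey
  linear_combination hkey
end

section
/- Let d ≥ 1, let F, B : ℝ → M_d(ℂ) be differentiable, C ∈ M_d(ℂ) a constant matrix, and α ∈ ℂ. Then F and B satisfy the period-one closure of the matrix dressing chain, CF' + F'C = [C, F² + B] + 2αC and B' = [B,F], if and only if for every μ ∈ ℂ the matrix-valued function 𝓛 := μ²C² − μ(CF + FC) − B satisfies the Lax-type equation 𝓛' = [𝓛, 𝓐] − 2μαC, where 𝓐 := F − μC. -/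
open Matrix

private lemma solve1 {M : Type*} [AddCommGroup M] {a b c e : M}
    (h : a = b) (hid : c - e = -(a - b)) : c = e := by
  rw [h, sub_self, neg_zero] at hid; exact sub_eq_zero.mp hid

private lemma solve2 {M : Type*} [AddCommGroup M] {a b a' b' c e : M}
    (h : a = b) (h' : a' = b') (hid : c - e = -(a - b) - (a' - b')) : c = e := by
  rw [h, h', sub_self, sub_self, neg_zero, sub_zero] at hid; exact sub_eq_zero.mp hid

private lemma key1 {d : ℕ} (C F F' B B' : Matrix (Fin d) (Fin d) ℂ) (α μ : ℂ)
    (h1 : C * F' + F' * C = (C * (F ^ 2 + B) - (F ^ 2 + B) * C) + (2 * α) • C)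
    (h2 : B' = B * F - F * B) :
    -(μ • (C * F' + F' * C)) - B'
      = (μ ^ 2 • C ^ 2 - μ • (C * F + F * C) - B) * (F - μ • C)
        - (F - μ • C) * (μ ^ 2 • C ^ 2 - μ • (C * F + F * C) - B)
        - (2 * μ * α) • C := by
  rw [h1, h2]
  simp only [pow_two, sub_mul, mul_sub, add_mul, mul_add, smul_mul_assoc,
    mul_smul_comm, smul_smul, smul_sub, smul_add, mul_assoc]
  module

private lemma key_b2 {d : ℕ} (C F F' B B' : Matrix (Fin d) (Fin d) ℂ) (α : ℂ)
    (h : -((0:ℂ) • (C * F' + F' * C)) - B'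
      = ((0:ℂ) ^ 2 • C ^ 2 - (0:ℂ) • (C * F + F * C) - B) * (F - (0:ℂ) • C)
        - (F - (0:ℂ) • C) * ((0:ℂ) ^ 2 • C ^ 2 - (0:ℂ) • (C * F + F * C) - B)
        - (2 * 0 * α) • C) : B' = B * F - F * B := by
  apply solve1 h
  simp only [pow_two, mul_zero, zero_mul, zero_smul, smul_zero, sub_zero, zero_sub,
    neg_mul, mul_neg, neg_neg, sub_mul, mul_sub]
  abel

private lemma key_b1 {d : ℕ} (C F F' B B' : Matrix (Fin d) (Fin d) ℂ) (α : ℂ)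
    (h2 : B' = B * F - F * B)
    (h : -((1:ℂ) • (C * F' + F' * C)) - B'
      = ((1:ℂ) ^ 2 • C ^ 2 - (1:ℂ) • (C * F + F * C) - B) * (F - (1:ℂ) • C)
        - (F - (1:ℂ) • C) * ((1:ℂ) ^ 2 • C ^ 2 - (1:ℂ) • (C * F + F * C) - B)
        - (2 * 1 * α) • C) :
    C * F' + F' * C = (C * (F ^ 2 + B) - (F ^ 2 + B) * C) + (2 * α) • C := by
  apply solve2 h h2
  simp only [one_smul, one_pow, mul_one, pow_two, sub_mul, mul_sub, add_mul, mul_add,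
    smul_mul_assoc, mul_smul_comm, smul_smul, smul_sub, smul_add, mul_assoc]
  module

private lemma hL {d : ℕ} (F F' B B' : ℝ → Matrix (Fin d) (Fin d) ℂ)
    (C : Matrix (Fin d) (Fin d) ℂ)
    (hF : ∀ x i j, HasDerivAt (fun t => F t i j) (F' x i j) x)
    (hB : ∀ x i j, HasDerivAt (fun t => B t i j) (B' x i j) x)
    (μ : ℂ) (x : ℝ) (i j : Fin d) :
    HasDerivAt (fun t => (μ ^ 2 • C ^ 2 - μ • (C * F t + F t * C) - B t) i j)
      ((-(μ • (C * F' x + F' x * C)) - B' x) i j) x := by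
  have hCF : HasDerivAt (fun t => (C * F t) i j) ((C * F' x) i j) x := by
    simp only [Matrix.mul_apply]
    exact HasDerivAt.fun_sum fun k _ => (hF x k j).const_mul (C i k)
  have hFC : HasDerivAt (fun t => (F t * C) i j) ((F' x * C) i j) x := by
    simp only [Matrix.mul_apply]
    exact HasDerivAt.fun_sum fun k _ => (hF x i k).mul_const (C k j)
  have key := (((hasDerivAt_const x ((μ ^ 2 • C ^ 2 : Matrix (Fin d) (Fin d) ℂ) i j)).sub
      (((hCF.add hFC).const_mul μ))).sub (hB x i j))
  have hfun : (fun t => (μ ^ 2 • C ^ 2 - μ • (C * F t + F t * C) - B t) i j)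
      = fun t => (μ ^ 2 • C ^ 2 : Matrix (Fin d) (Fin d) ℂ) i j
          - μ * ((C * F t) i j + (F t * C) i j) - B t i j := by
    funext t
    simp [Matrix.sub_apply, Matrix.smul_apply, Matrix.add_apply, smul_eq_mul]
    ring
  rw [hfun]
  convert key using 1
  · rfl
  · rfl
  simp [Matrix.sub_apply, Matrix.smul_apply, Matrix.add_apply, Matrix.neg_apply, smul_eq_mul]
  ring

/-- `(F, B)` satisfies the period-one closure of the matrix dressing chain
`CF' + F'C = [C, F² + B] + 2αC`, `B' = [B,F]` iff for every `μ ∈ ℂ` the matrix function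
`𝓛 = μ²C² - μ(CF + FC) - B` satisfies `𝓛' = [𝓛, 𝓐] - 2μαC` with `𝓐 = F - μC`.
Derivatives are computed entrywise. -/
theorem dressing_chain_iff_lax_equation
    (d : ℕ) (hd : 1 ≤ d)
    (F F' B B' : ℝ → Matrix (Fin d) (Fin d) ℂ)
    (C : Matrix (Fin d) (Fin d) ℂ) (α : ℂ)
    (hF : ∀ x i j, HasDerivAt (fun t => F t i j) (F' x i j) x)
    (hB : ∀ x i j, HasDerivAt (fun t => B t i j) (B' x i j) x) :
    ((∀ x, C * F' x + F' x * C
          = (C * ((F x) ^ 2 + B x) - ((F x) ^ 2 + B x) * C) + (2 * α) • C)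
        ∧ (∀ x, B' x = B x * F x - F x * B x))
    ↔ (∀ μ : ℂ, ∀ x i j,
        HasDerivAt
          (fun t => (μ ^ 2 • C ^ 2 - μ • (C * F t + F t * C) - B t) i j)
          (((μ ^ 2 • C ^ 2 - μ • (C * F x + F x * C) - B x) * (F x - μ • C)
            - (F x - μ • C) * (μ ^ 2 • C ^ 2 - μ • (C * F x + F x * C) - B x)
            - (2 * μ * α) • C) i j) x) := by
  constructor
  · rintro ⟨h1, h2⟩ μ x i j
    have h := hL F F' B B' C hF hB μ x i j
    rwa [key1 C (F x) (F' x) (B x) (B' x) α μ (h1 x) (h2 x)] at h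
  · intro h
    have eq : ∀ μ x, -(μ • (C * F' x + F' x * C)) - B' x
        = (μ ^ 2 • C ^ 2 - μ • (C * F x + F x * C) - B x) * (F x - μ • C)
          - (F x - μ • C) * (μ ^ 2 • C ^ 2 - μ • (C * F x + F x * C) - B x)
          - (2 * μ * α) • C := fun μ x =>
      Matrix.ext fun i j => (hL F F' B B' C hF hB μ x i j).unique (h μ x i j)
    have h2 : ∀ x, B' x = B x * F x - F x * B x := fun x =>
      key_b2 C (F x) (F' x) (B x) (B' x) α (eq 0 x)
    exact ⟨fun x => key_b1 C (F x) (F' x) (B x) (B' x) α (h2 x) (eq 1 x), h2⟩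
end

section
/- Let d ≥ 1 and suppose F, B : ℝ → M_d(ℂ) are differentiable and satisfy the period-one closure of the matrix dressing chain CF' + F'C = [C, F² + B] + 2αC and B' = [B,F], where C ∈ M_d(ℂ) is a constant invertible matrix and α ∈ ℂ. Then: (i) the derivative of x ↦ tr(C·F(x)) is identically equal to α·tr(C); (ii) the derivative of x ↦ tr(F(x)) is identically equal to d·α; (iii) for every natural number k the function x ↦ tr(B(x)^k) is constant. -/
open Matrix

private lemma trace_hasDerivAt {d : ℕ} {f : ℝ → Matrix (Fin d) (Fin d) ℂ}
    {g : Matrix (Fin d) (Fin d) ℂ} {x : ℝ}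
    (h : ∀ i j, HasDerivAt (fun t => f t i j) (g i j) x) :
    HasDerivAt (fun t => (f t).trace) g.trace x := by
  simp only [Matrix.trace, Matrix.diag]
  exact HasDerivAt.fun_sum (fun i _ => h i i)

private lemma mul_entry_hasDerivAt {d : ℕ} {f g : ℝ → Matrix (Fin d) (Fin d) ℂ}
    {f' g' : Matrix (Fin d) (Fin d) ℂ} {x : ℝ}
    (hf : ∀ i j, HasDerivAt (fun t => f t i j) (f' i j) x)
    (hg : ∀ i j, HasDerivAt (fun t => g t i j) (g' i j) x) :
    ∀ i j, HasDerivAt (fun t => (f t * g t) i j) ((f' * g x + f x * g') i j) x := by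
  intro i j
  have : HasDerivAt (fun t => ∑ k, f t i k * g t k j)
      (∑ k, (f' i k * g x k j + f x i k * g' k j)) x :=
    HasDerivAt.fun_sum (fun k _ => (hf i k).mul (hg k j))
  simpa [Matrix.mul_apply, Matrix.add_apply, Finset.sum_add_distrib] using this

private noncomputable def powDeriv {d : ℕ} (A A' : Matrix (Fin d) (Fin d) ℂ) :
    ℕ → Matrix (Fin d) (Fin d) ℂ
  | 0 => 0
  | n + 1 => powDeriv A A' n * A + A ^ n * A'

private lemma pow_entry_hasDerivAt {d : ℕ} {f : ℝ → Matrix (Fin d) (Fin d) ℂ}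
    {f' : Matrix (Fin d) (Fin d) ℂ} {x : ℝ}
    (hf : ∀ i j, HasDerivAt (fun t => f t i j) (f' i j) x) :
    ∀ k : ℕ, ∀ i j, HasDerivAt (fun t => (f t ^ k) i j) (powDeriv (f x) f' k i j) x := by
  intro k
  induction k with
  | zero =>
      intro i j
      simpa [powDeriv] using hasDerivAt_const x ((1 : Matrix (Fin d) (Fin d) ℂ) i j)
  | succ n ih =>
      intro i j
      have := mul_entry_hasDerivAt (f := fun t => f t ^ n) (g := f) ih hf i j
      simpa [powDeriv, pow_succ] using this

/-- For solutions of the period-one matrix dressing chain with invertible `C`: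
(i) `tr(CF)' ≡ α·tr C`; (ii) `tr(F)' ≡ d·α`; (iii) `tr(Bᵏ)` is constant for every `k`. -/
theorem dressing_chain_trace_integrals
    (d : ℕ) (hd : 1 ≤ d)
    (F F' B B' : ℝ → Matrix (Fin d) (Fin d) ℂ)
    (C : Matrix (Fin d) (Fin d) ℂ) (hC : IsUnit C) (α : ℂ)
    (hF : ∀ x i j, HasDerivAt (fun t => F t i j) (F' x i j) x)
    (hB : ∀ x i j, HasDerivAt (fun t => B t i j) (B' x i j) x)
    (hchain : ∀ x, C * F' x + F' x * C
        = (C * ((F x) ^ 2 + B x) - ((F x) ^ 2 + B x) * C) + (2 * α) • C)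
    (hBeq : ∀ x, B' x = B x * F x - F x * B x) :
    (∀ x, HasDerivAt (fun t => (C * F t).trace) (α * C.trace) x)
    ∧ (∀ x, HasDerivAt (fun t => (F t).trace) ((d : ℂ) * α) x)
    ∧ (∀ k : ℕ, ∀ x y : ℝ, ((B x) ^ k).trace = ((B y) ^ k).trace) := by
  -- trace identity from the chain
  have key : ∀ x : ℝ, (C * F' x).trace = α * C.trace := by
    intro x
    have h := congrArg Matrix.trace (hchain x)
    rw [Matrix.trace_add, Matrix.trace_add, Matrix.trace_sub, Matrix.trace_smul,
      Matrix.trace_mul_comm (F' x) C, Matrix.trace_mul_comm ((F x) ^ 2 + B x) C] at h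
    simp only [smul_eq_mul] at h
    linear_combination h / 2
  have hdet : IsUnit C.det := (Matrix.isUnit_iff_isUnit_det C).mp hC
  have hCinv : C⁻¹ * C = 1 := Matrix.nonsing_inv_mul C hdet
  have hCC : C * C⁻¹ = 1 := Matrix.mul_nonsing_inv C hdet
  have keyF : ∀ x : ℝ, (F' x).trace = (d : ℂ) * α := by
    intro x
    have h := congrArg (fun M => (C⁻¹ * M).trace) (hchain x)
    have e1 : (C⁻¹ * (C * F' x + F' x * C)).trace = 2 * (F' x).trace := by
      rw [Matrix.mul_add, Matrix.trace_add, ← Matrix.mul_assoc, hCinv, Matrix.one_mul,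
        ← Matrix.mul_assoc, Matrix.trace_mul_cycle C⁻¹ (F' x) C, hCC, Matrix.one_mul]
      ring
    have e2 : (C⁻¹ * ((C * ((F x) ^ 2 + B x) - ((F x) ^ 2 + B x) * C) + (2 * α) • C)).trace
        = 2 * α * (d : ℂ) := by
      rw [Matrix.mul_add, Matrix.mul_sub, Matrix.trace_add, Matrix.trace_sub,
        ← Matrix.mul_assoc, hCinv, Matrix.one_mul,
        ← Matrix.mul_assoc, Matrix.trace_mul_cycle C⁻¹ ((F x) ^ 2 + B x) C, hCC,
        Matrix.one_mul, Matrix.mul_smul, Matrix.trace_smul, hCinv, Matrix.trace_one]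
      simp [smul_eq_mul, Fintype.card_fin]
    rw [e1, e2] at h
    linear_combination h / 2
  refine ⟨?_, ?_, ?_⟩
  · intro x
    have hCF := mul_entry_hasDerivAt (f := fun _ => C) (g := F) (f' := 0) (g' := F' x)
      (fun i j => hasDerivAt_const x (C i j)) (hF x)
    have := trace_hasDerivAt hCF
    simpa [key x] using this
  · intro x
    have := trace_hasDerivAt (hF x)
    simpa [keyF x] using this
  · intro k
    have hzero : ∀ x : ℝ, ∀ m : ℕ, ∀ j : ℕ,
        (powDeriv (B x) (B' x) m * (B x) ^ j).trace = 0 := by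
      intro x m
      induction m with
      | zero => intro j; simp [powDeriv]
      | succ n ih =>
          intro j
          have hcomm : ∀ p : ℕ, ((B x) ^ p * B' x).trace = 0 := by
            intro p
            rw [hBeq x, Matrix.mul_sub, Matrix.trace_sub, ← Matrix.mul_assoc,
              ← Matrix.mul_assoc, ← pow_succ,
              Matrix.trace_mul_cycle ((B x) ^ p) (F x) (B x), ← pow_succ']
            ring
          calc (powDeriv (B x) (B' x) (n + 1) * (B x) ^ j).trace
              = (powDeriv (B x) (B' x) n * (B x) ^ (j + 1)).trace
                + ((B x) ^ (j + n) * B' x).trace := by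
                simp only [powDeriv, Matrix.add_mul, Matrix.trace_add]
                congr 1
                · rw [Matrix.mul_assoc, ← pow_succ']
                · rw [Matrix.trace_mul_cycle ((B x) ^ n) (B' x) ((B x) ^ j),
                    ← pow_add]
            _ = 0 := by rw [ih (j + 1), hcomm (j + n)]; ring
    have hderiv : ∀ x : ℝ, HasDerivAt (fun t => ((B t) ^ k).trace) 0 x := by
      intro x
      have := trace_hasDerivAt (pow_entry_hasDerivAt (hB x) k)
      have h0 : (powDeriv (B x) (B' x) k).trace = 0 := by
        simpa using hzero x k 0
      simpa [h0] using this
    intro x y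
    exact is_const_of_deriv_eq_zero
      (fun t => (hderiv t).differentiableAt)
      (fun t => (hderiv t).deriv) x y
end

section
/- Let d ≥ 1, let J ∈ M_d(ℝ) be a constant symmetric matrix, let Ω : ℝ → M_d(ℝ) be differentiable with Ω(x)ᵀ = −Ω(x) for all x, and let P : ℝ → M_d(ℝ) be differentiable with P(x)ᵀ = P(x) for all x. Set M := JΩ + ΩJ. Then the triple (F, B, C) = (Ω, P, J) satisfies the period-one matrix dressing chain with α = 0, i.e. JΩ' + Ω'J = [J, Ω² + P] and P' = [P, Ω], if and only if (M, P) satisfies the equations of motion of the d-dimensional rigid body about its centre of mass in a Newtonian field with quadratic potential: M' = [M, Ω] − [P, J] and P' = [P, Ω]. -/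
open Matrix

/-- With `J` symmetric, `Ω` skew-symmetric, `P` symmetric and `M = JΩ + ΩJ`,
the triple `(F,B,C) = (Ω,P,J)` satisfies the period-one matrix dressing chain with `α = 0`,
i.e. `JΩ' + Ω'J = [J, Ω² + P]`, `P' = [P,Ω]`, iff `(M,P)` satisfies the rigid-body
equations `M' = [M,Ω] - [P,J]`, `P' = [P,Ω]`. Derivatives are computed entrywise. -/
theorem dressing_chain_iff_rigid_body
    (d : ℕ) (hd : 1 ≤ d)
    (J : Matrix (Fin d) (Fin d) ℝ) (hJ : J.IsSymm)
    (Ω Ω' P P' M' : ℝ → Matrix (Fin d) (Fin d) ℝ)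
    (hΩ : ∀ x i j, HasDerivAt (fun t => Ω t i j) (Ω' x i j) x)
    (hΩskew : ∀ x, (Ω x)ᵀ = -(Ω x))
    (hP : ∀ x i j, HasDerivAt (fun t => P t i j) (P' x i j) x)
    (hPsymm : ∀ x, (P x)ᵀ = P x)
    (hM : ∀ x i j, HasDerivAt (fun t => (J * Ω t + Ω t * J) i j) (M' x i j) x) :
    ((∀ x, J * Ω' x + Ω' x * J
        = J * ((Ω x) ^ 2 + P x) - ((Ω x) ^ 2 + P x) * J)
      ∧ (∀ x, P' x = P x * Ω x - Ω x * P x))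
    ↔ ((∀ x, M' x = ((J * Ω x + Ω x * J) * Ω x - Ω x * (J * Ω x + Ω x * J))
            - (P x * J - J * P x))
      ∧ (∀ x, P' x = P x * Ω x - Ω x * P x)) := by
  have hMval : ∀ x, M' x = J * Ω' x + Ω' x * J := by
    intro x
    funext i j
    have h2 : HasDerivAt (fun t => (J * Ω t + Ω t * J) i j)
        ((J * Ω' x + Ω' x * J) i j) x := by
      simp only [Matrix.add_apply, Matrix.mul_apply]
      exact ((HasDerivAt.fun_sum (fun k _ => ((hΩ x k j).const_mul (J i k)))).add
        (HasDerivAt.fun_sum (fun k _ => ((hΩ x i k).mul_const (J k j)))))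
    exact (hM x i j).unique h2
  constructor
  · rintro ⟨h1, h2⟩
    refine ⟨fun x => ?_, h2⟩
    rw [hMval x, h1 x]
    noncomm_ring
  · rintro ⟨h1, h2⟩
    refine ⟨fun x => ?_, h2⟩
    have := h1 x
    rw [hMval x] at this
    rw [this]
    noncomm_ring
end

section
/- Let d ≥ 1, let J ∈ M_d(ℝ) be a constant symmetric invertible matrix, Ω : ℝ → M_d(ℝ) twice differentiable with Ω(x)ᵀ = −Ω(x), and P : ℝ → M_d(ℝ) differentiable with P(x)ᵀ = P(x), satisfying the rigid-body equations M' = [M, Ω] − [P, J] and P' = [P, Ω], where M := JΩ + ΩJ. Set U := Ω² − Ω' + P. Then the Schrödinger operator L = −D_x² + U commutes with the first-order operator A = J⁻¹(D_x + Ω): for every three-times differentiable ψ : ℝ → ℂ^d one has −(J⁻¹(ψ' + Ωψ))'' + U·J⁻¹(ψ' + Ωψ) = J⁻¹((−ψ'' + Uψ)' + Ω·(−ψ'' + Uψ)). -/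
open Matrix

noncomputable def cmplx {d : ℕ} (A : Matrix (Fin d) (Fin d) ℝ) :
    Matrix (Fin d) (Fin d) ℂ := A.map (fun r => (r : ℂ))

section aux
variable {d : ℕ}

lemma cmplx_add (A B : Matrix (Fin d) (Fin d) ℝ) : cmplx (A + B) = cmplx A + cmplx B := by
  ext i j; simp [cmplx]

lemma cmplx_sub (A B : Matrix (Fin d) (Fin d) ℝ) : cmplx (A - B) = cmplx A - cmplx B := by
  ext i j; simp [cmplx]

lemma cmplx_mul (A B : Matrix (Fin d) (Fin d) ℝ) : cmplx (A * B) = cmplx A * cmplx B := by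
  ext i j; simp [cmplx, Matrix.mul_apply]

lemma cmplx_pow2 (A : Matrix (Fin d) (Fin d) ℝ) : cmplx (A ^ 2) = cmplx A ^ 2 := by
  rw [pow_two, pow_two, cmplx_mul]

lemma hasDerivAt_cmplx_mulVec {A : ℝ → Matrix (Fin d) (Fin d) ℝ}
    {A' : Matrix (Fin d) (Fin d) ℝ} {v : ℝ → Fin d → ℂ} {v' : Fin d → ℂ} {x : ℝ}
    (hA : ∀ i j, HasDerivAt (fun t => A t i j) (A' i j) x)
    (hv : ∀ j, HasDerivAt (fun t => v t j) (v' j) x) (i : Fin d) :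
    HasDerivAt (fun t => ((cmplx (A t)).mulVec (v t)) i)
      (((cmplx A').mulVec (v x) + (cmplx (A x)).mulVec v') i) x := by
  have h1 : HasDerivAt (fun t => ∑ j, ((A t i j : ℂ)) * v t j)
      (∑ j, (((A' i j : ℂ)) * v x j + ((A x i j : ℂ)) * v' j)) x :=
    HasDerivAt.fun_sum fun j _ => (hA i j).ofReal_comp.mul (hv j)
  simpa [cmplx, Matrix.mulVec, dotProduct, Finset.sum_add_distrib] using h1

lemma hasDerivAt_const_mulVec (B : Matrix (Fin d) (Fin d) ℂ)
    {v : ℝ → Fin d → ℂ} {v' : Fin d → ℂ} {x : ℝ}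
    (hv : ∀ j, HasDerivAt (fun t => v t j) (v' j) x) (i : Fin d) :
    HasDerivAt (fun t => (B.mulVec (v t)) i) ((B.mulVec v') i) x := by
  have h1 : HasDerivAt (fun t => ∑ j, B i j * v t j) (∑ j, B i j * v' j) x :=
    HasDerivAt.fun_sum fun j _ => (hv j).const_mul (B i j)
  simpa [Matrix.mulVec, dotProduct] using h1

end aux

/-- For solutions of the rigid-body equations `M' = [M,Ω] - [P,J]`,
`P' = [P,Ω]` (with `M = JΩ + ΩJ`, `J` symmetric invertible, `Ω` skew, `P` symmetric),
the Schrödinger operator `L = -D² + U` with `U = Ω² - Ω' + P` commutes with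
`A = J⁻¹(D + Ω)`: for every three-times differentiable `ψ : ℝ → ℂ^d`,
`-(J⁻¹(ψ' + Ωψ))'' + U·J⁻¹(ψ' + Ωψ) = J⁻¹((-ψ'' + Uψ)' + Ω·(-ψ'' + Uψ))`. -/
theorem schrodinger_commutes_with_first_order_operator
    (d : ℕ) (hd : 1 ≤ d)
    (J : Matrix (Fin d) (Fin d) ℝ) (hJsymm : J.IsSymm) (hJinv : IsUnit J)
    (Ω Ω' Ω'' P P' M' : ℝ → Matrix (Fin d) (Fin d) ℝ)
    (hΩ : ∀ x i j, HasDerivAt (fun t => Ω t i j) (Ω' x i j) x)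
    (hΩ' : ∀ x i j, HasDerivAt (fun t => Ω' t i j) (Ω'' x i j) x)
    (hΩskew : ∀ x, (Ω x)ᵀ = -(Ω x))
    (hP : ∀ x i j, HasDerivAt (fun t => P t i j) (P' x i j) x)
    (hPsymm : ∀ x, (P x)ᵀ = P x)
    (hM : ∀ x i j, HasDerivAt (fun t => (J * Ω t + Ω t * J) i j) (M' x i j) x)
    (hrigid : ∀ x, M' x
        = ((J * Ω x + Ω x * J) * Ω x - Ω x * (J * Ω x + Ω x * J))
          - (P x * J - J * P x))
    (hPeq : ∀ x, P' x = P x * Ω x - Ω x * P x)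
    (ψ ψ' ψ'' ψ''' : ℝ → Fin d → ℂ)
    (hψ : ∀ x i, HasDerivAt (fun t => ψ t i) (ψ' x i) x)
    (hψ' : ∀ x i, HasDerivAt (fun t => ψ' t i) (ψ'' x i) x)
    (hψ'' : ∀ x i, HasDerivAt (fun t => ψ'' t i) (ψ''' x i) x) :
    ∀ x i,
      -(deriv (fun t => deriv (fun s =>
          ((cmplx J)⁻¹.mulVec (ψ' s + (cmplx (Ω s)).mulVec (ψ s))) i) t) x)
      + ((cmplx ((Ω x) ^ 2 - Ω' x + P x)).mulVec
          ((cmplx J)⁻¹.mulVec (ψ' x + (cmplx (Ω x)).mulVec (ψ x)))) i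
      = ((cmplx J)⁻¹.mulVec (fun j =>
          deriv (fun t =>
            (-(ψ'' t) + (cmplx ((Ω t) ^ 2 - Ω' t + P t)).mulVec (ψ t)) j) x
          + ((cmplx (Ω x)).mulVec
              (-(ψ'' x) + (cmplx ((Ω x) ^ 2 - Ω' x + P x)).mulVec (ψ x))) j)) i := by
  intro x i
  -- invertibility of the complexified J
  have hJc : IsUnit (cmplx J) := by
    have h : cmplx J = Complex.ofRealHom.mapMatrix J := rfl
    rw [h]; exact hJinv.map _
  have hdet : IsUnit (cmplx J).det := (Matrix.isUnit_iff_isUnit_det _).mp hJc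
  have hK1 : (cmplx J)⁻¹ * cmplx J = 1 := Matrix.nonsing_inv_mul _ hdet
  have hK2 : cmplx J * (cmplx J)⁻¹ = 1 := Matrix.mul_nonsing_inv _ hdet
  -- identify M'
  have hM'eq : ∀ y, M' y = J * Ω' y + Ω' y * J := by
    intro y
    ext i' j'
    have h1 : HasDerivAt (fun t => (J * Ω t + Ω t * J) i' j')
        ((J * Ω' y + Ω' y * J) i' j') y := by
      have hs : HasDerivAt (fun t => (∑ k, J i' k * Ω t k j') + (∑ k, Ω t i' k * J k j'))
          ((∑ k, J i' k * Ω' y k j') + (∑ k, Ω' y i' k * J k j')) y :=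
        (HasDerivAt.fun_sum fun k _ => (hΩ y k j').const_mul (J i' k)).add
          (HasDerivAt.fun_sum fun k _ => (hΩ y i' k).mul_const (J k j'))
      simpa [Matrix.add_apply, Matrix.mul_apply] using hs
    exact ((h1.unique (hM y i' j'))).symm
  -- real matrix identity 1 (from the rigid-body equation)
  have E1 : J * ((Ω x) ^ 2 - Ω' x + P x)
      = ((Ω x) ^ 2 - Ω' x + P x) * J + (Ω' x * J + Ω' x * J) := by
    have h' : J * Ω' x + Ω' x * J
        = ((J * Ω x + Ω x * J) * Ω x - Ω x * (J * Ω x + Ω x * J)) - (P x * J - J * P x) := by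
      rw [← hM'eq x]; exact hrigid x
    have hz : J * ((Ω x) ^ 2 - Ω' x + P x)
        - (((Ω x) ^ 2 - Ω' x + P x) * J + (Ω' x * J + Ω' x * J))
        = (((J * Ω x + Ω x * J) * Ω x - Ω x * (J * Ω x + Ω x * J)) - (P x * J - J * P x))
          - (J * Ω' x + Ω' x * J) := by
      noncomm_ring
    rw [← h', sub_self] at hz
    exact sub_eq_zero.mp hz
  -- real matrix identity 2 (commutator of U with Ω, using P' = [P,Ω])
  have E2 : Ω' x * Ω x + Ω x * Ω' x - Ω'' x + P' x
      = (((Ω x) ^ 2 - Ω' x + P x) * Ω x + ((Ω' x * Ω x) + (Ω' x * Ω x)) - Ω'' x)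
        - Ω x * ((Ω x) ^ 2 - Ω' x + P x) := by
    rw [hPeq x]; noncomm_ring
  -- abbreviations (complex matrices and vectors)
  set K := (cmplx J)⁻¹ with hKdef
  -- complexified identities
  have hdecU : cmplx ((Ω x) ^ 2 - Ω' x + P x)
      = cmplx (Ω x) ^ 2 - cmplx (Ω' x) + cmplx (P x) := by
    rw [cmplx_add, cmplx_sub, cmplx_pow2]
  have hdecU' : cmplx (Ω' x * Ω x + Ω x * Ω' x - Ω'' x + P' x)
      = cmplx (Ω' x) * cmplx (Ω x) + cmplx (Ω x) * cmplx (Ω' x) - cmplx (Ω'' x)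
        + cmplx (P' x) := by
    rw [cmplx_add, cmplx_sub, cmplx_add, cmplx_mul, cmplx_mul]
  have E1c : cmplx J * (cmplx (Ω x) ^ 2 - cmplx (Ω' x) + cmplx (P x))
      = (cmplx (Ω x) ^ 2 - cmplx (Ω' x) + cmplx (P x)) * cmplx J
        + (cmplx (Ω' x) * cmplx J + cmplx (Ω' x) * cmplx J) := by
    have h := congrArg cmplx E1
    simpa only [cmplx_mul, cmplx_add, cmplx_sub, cmplx_pow2] using h
  have E2c : cmplx (Ω' x) * cmplx (Ω x) + cmplx (Ω x) * cmplx (Ω' x) - cmplx (Ω'' x)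
        + cmplx (P' x)
      = ((cmplx (Ω x) ^ 2 - cmplx (Ω' x) + cmplx (P x)) * cmplx (Ω x)
          + ((cmplx (Ω' x) * cmplx (Ω x)) + (cmplx (Ω' x) * cmplx (Ω x))) - cmplx (Ω'' x))
        - cmplx (Ω x) * (cmplx (Ω x) ^ 2 - cmplx (Ω' x) + cmplx (P x)) := by
    have h := congrArg cmplx E2
    simpa only [cmplx_mul, cmplx_add, cmplx_sub, cmplx_pow2] using h
  have hUK : (cmplx (Ω x) ^ 2 - cmplx (Ω' x) + cmplx (P x)) * K
      = K * ((cmplx (Ω x) ^ 2 - cmplx (Ω' x) + cmplx (P x)) + (cmplx (Ω' x) + cmplx (Ω' x))) := by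
    calc (cmplx (Ω x) ^ 2 - cmplx (Ω' x) + cmplx (P x)) * K
        = (K * cmplx J) * ((cmplx (Ω x) ^ 2 - cmplx (Ω' x) + cmplx (P x)) * K) := by
          rw [hK1, one_mul]
      _ = K * ((cmplx J * (cmplx (Ω x) ^ 2 - cmplx (Ω' x) + cmplx (P x))) * K) := by
          noncomm_ring
      _ = K * (((cmplx (Ω x) ^ 2 - cmplx (Ω' x) + cmplx (P x)) * cmplx J
            + (cmplx (Ω' x) * cmplx J + cmplx (Ω' x) * cmplx J)) * K) := by rw [E1c]
      _ = K * (cmplx (Ω x) ^ 2 - cmplx (Ω' x) + cmplx (P x)) * (cmplx J * K)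
            + (K * cmplx (Ω' x) * (cmplx J * K) + K * cmplx (Ω' x) * (cmplx J * K)) := by
          noncomm_ring
      _ = K * ((cmplx (Ω x) ^ 2 - cmplx (Ω' x) + cmplx (P x)) + (cmplx (Ω' x) + cmplx (Ω' x))) := by
          rw [hK2]; noncomm_ring
  -- derivative of the entries of U t = Ω t ^ 2 - Ω' t + P t
  have hU : ∀ y i' j', HasDerivAt (fun t => ((Ω t) ^ 2 - Ω' t + P t) i' j')
      ((Ω' y * Ω y + Ω y * Ω' y - Ω'' y + P' y) i' j') y := by
    intro y i' j'
    have hs : HasDerivAt (fun t => (∑ k, Ω t i' k * Ω t k j') - Ω' t i' j' + P t i' j')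
        ((∑ k, (Ω' y i' k * Ω y k j' + Ω y i' k * Ω' y k j')) - Ω'' y i' j' + P' y i' j') y :=
      ((HasDerivAt.fun_sum fun k _ => ((hΩ y i' k).mul (hΩ y k j'))).sub (hΩ' y i' j')).add
        (hP y i' j')
    have he : ∀ t, ((Ω t) ^ 2 - Ω' t + P t) i' j'
        = (∑ k, Ω t i' k * Ω t k j') - Ω' t i' j' + P t i' j' := by
      intro t; simp [pow_two, Matrix.sub_apply, Matrix.add_apply, Matrix.mul_apply]
    have hv : (Ω' y * Ω y + Ω y * Ω' y - Ω'' y + P' y) i' j'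
        = (∑ k, (Ω' y i' k * Ω y k j' + Ω y i' k * Ω' y k j')) - Ω'' y i' j' + P' y i' j' := by
      simp [Matrix.sub_apply, Matrix.add_apply, Matrix.mul_apply, Finset.sum_add_distrib]
    rw [hv]
    exact hs.congr_of_eventuallyEq (Filter.Eventually.of_forall he)
  -- first derivative of A ψ
  have hf1 : ∀ t, HasDerivAt
      (fun s => (K.mulVec (ψ' s + (cmplx (Ω s)).mulVec (ψ s))) i)
      ((K.mulVec (ψ'' t + ((cmplx (Ω' t)).mulVec (ψ t) + (cmplx (Ω t)).mulVec (ψ' t)))) i) t :=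
    fun t => hasDerivAt_const_mulVec K
      (fun j => (hψ' t j).add (hasDerivAt_cmplx_mulVec (fun a b => hΩ t a b) (hψ t) j)) i
  have hinner : (fun t => deriv (fun s =>
      (K.mulVec (ψ' s + (cmplx (Ω s)).mulVec (ψ s))) i) t)
      = fun t => (K.mulVec (ψ'' t + ((cmplx (Ω' t)).mulVec (ψ t)
          + (cmplx (Ω t)).mulVec (ψ' t)))) i :=
    funext fun t => (hf1 t).deriv
  -- second derivative of A ψ
  have hf2 : HasDerivAt (fun t => (K.mulVec (ψ'' t + ((cmplx (Ω' t)).mulVec (ψ t)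
        + (cmplx (Ω t)).mulVec (ψ' t)))) i)
      ((K.mulVec (ψ''' x + (((cmplx (Ω'' x)).mulVec (ψ x) + (cmplx (Ω' x)).mulVec (ψ' x))
        + ((cmplx (Ω' x)).mulVec (ψ' x) + (cmplx (Ω x)).mulVec (ψ'' x))))) i) x :=
    hasDerivAt_const_mulVec K
      (fun j => (hψ'' x j).add
        (((hasDerivAt_cmplx_mulVec (fun a b => hΩ' x a b) (hψ x) j)).add
          (hasDerivAt_cmplx_mulVec (fun a b => hΩ x a b) (hψ' x) j))) i
  -- derivative of L ψ entries
  have hRin : ∀ j, HasDerivAt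
      (fun t => (-(ψ'' t) + (cmplx ((Ω t) ^ 2 - Ω' t + P t)).mulVec (ψ t)) j)
      ((-(ψ''' x) + ((cmplx (Ω' x * Ω x + Ω x * Ω' x - Ω'' x + P' x)).mulVec (ψ x)
        + (cmplx ((Ω x) ^ 2 - Ω' x + P x)).mulVec (ψ' x))) j) x :=
    fun j => ((hψ'' x j).neg).add (hasDerivAt_cmplx_mulVec (fun a b => hU x a b) (hψ x) j)
  have hRfun : (fun j => deriv (fun t =>
        (-(ψ'' t) + (cmplx ((Ω t) ^ 2 - Ω' t + P t)).mulVec (ψ t)) j) x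
        + ((cmplx (Ω x)).mulVec
            (-(ψ'' x) + (cmplx ((Ω x) ^ 2 - Ω' x + P x)).mulVec (ψ x))) j)
      = (-(ψ''' x) + ((cmplx (Ω' x * Ω x + Ω x * Ω' x - Ω'' x + P' x)).mulVec (ψ x)
          + (cmplx ((Ω x) ^ 2 - Ω' x + P x)).mulVec (ψ' x)))
        + (cmplx (Ω x)).mulVec
            (-(ψ'' x) + (cmplx ((Ω x) ^ 2 - Ω' x + P x)).mulVec (ψ x)) := by
    funext j
    rw [(hRin j).deriv]
    rfl
  rw [hinner, hf2.deriv, hRfun, hdecU, hdecU']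
  -- now a pure linear-algebra identity
  have hvec : -(K.mulVec (ψ''' x + (((cmplx (Ω'' x)).mulVec (ψ x)
        + (cmplx (Ω' x)).mulVec (ψ' x))
        + ((cmplx (Ω' x)).mulVec (ψ' x) + (cmplx (Ω x)).mulVec (ψ'' x)))))
      + (cmplx (Ω x) ^ 2 - cmplx (Ω' x) + cmplx (P x)).mulVec
          (K.mulVec (ψ' x + (cmplx (Ω x)).mulVec (ψ x)))
      = K.mulVec ((-(ψ''' x) + ((cmplx (Ω' x) * cmplx (Ω x) + cmplx (Ω x) * cmplx (Ω' x)
            - cmplx (Ω'' x) + cmplx (P' x)).mulVec (ψ x)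
          + (cmplx (Ω x) ^ 2 - cmplx (Ω' x) + cmplx (P x)).mulVec (ψ' x)))
        + (cmplx (Ω x)).mulVec
            (-(ψ'' x) + (cmplx (Ω x) ^ 2 - cmplx (Ω' x) + cmplx (P x)).mulVec (ψ x))) := by
    rw [Matrix.mulVec_mulVec, hUK, ← Matrix.mulVec_mulVec, ← Matrix.mulVec_neg,
      ← Matrix.mulVec_add]
    congr 1
    rw [E2c]
    simp only [Matrix.add_mulVec, Matrix.sub_mulVec, Matrix.mulVec_add, Matrix.mulVec_sub,
      Matrix.mulVec_neg, Matrix.neg_mulVec, ← Matrix.mulVec_mulVec, pow_two]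
    abel
  exact congrFun hvec i
end

section
/- Let d ≥ 1, let J ∈ M_d(ℝ) be a constant symmetric matrix, Ω : ℝ → M_d(ℝ) differentiable with Ω(x)ᵀ = −Ω(x), and P : ℝ → M_d(ℝ) differentiable with P(x)ᵀ = P(x), satisfying the rigid-body equations M' = [M, Ω] − [P, J] and P' = [P, Ω], where M := JΩ + ΩJ. Then the potential U := Ω² − Ω' + P is formally self-adjoint with respect to J: U(x)ᵀ J = J U(x) for all x. -/
open Matrix

/-- For solutions of the rigid-body equations `M' = [M,Ω] - [P,J]`,
`P' = [P,Ω]` (with `M = JΩ + ΩJ`, `J` symmetric, `Ω` skew, `P` symmetric), the potential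
`U = Ω² - Ω' + P` is formally self-adjoint with respect to `J`: `Uᵀ J = J U`. -/
theorem rigid_body_potential_selfadjoint_wrt_J
    (d : ℕ) (hd : 1 ≤ d)
    (J : Matrix (Fin d) (Fin d) ℝ) (hJsymm : J.IsSymm)
    (Ω Ω' P P' M' : ℝ → Matrix (Fin d) (Fin d) ℝ)
    (hΩ : ∀ x i j, HasDerivAt (fun t => Ω t i j) (Ω' x i j) x)
    (hΩskew : ∀ x, (Ω x)ᵀ = -(Ω x))
    (hP : ∀ x i j, HasDerivAt (fun t => P t i j) (P' x i j) x)
    (hPsymm : ∀ x, (P x)ᵀ = P x)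
    (hM : ∀ x i j, HasDerivAt (fun t => (J * Ω t + Ω t * J) i j) (M' x i j) x)
    (hrigid : ∀ x, M' x
        = ((J * Ω x + Ω x * J) * Ω x - Ω x * (J * Ω x + Ω x * J))
          - (P x * J - J * P x))
    (hPeq : ∀ x, P' x = P x * Ω x - Ω x * P x) :
    ∀ x, ((Ω x) ^ 2 - Ω' x + P x)ᵀ * J = J * ((Ω x) ^ 2 - Ω' x + P x) := by
  have hM' : ∀ x, M' x = J * Ω' x + Ω' x * J := by
    intro x
    ext i j
    have h1 : HasDerivAt (fun t => (J * Ω t + Ω t * J) i j)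
        ((J * Ω' x + Ω' x * J) i j) x := by
      simp only [Matrix.add_apply, Matrix.mul_apply]
      exact HasDerivAt.add
        (HasDerivAt.fun_sum fun k _ => (hΩ x k j).const_mul (J i k))
        (HasDerivAt.fun_sum fun k _ => (hΩ x i k).mul_const (J k j))
    exact (hM x i j).unique h1
  have hΩ'skew : ∀ x, (Ω' x)ᵀ = -(Ω' x) := by
    intro x
    ext i j
    have h1 : HasDerivAt (fun t => Ω t j i) (-(Ω' x i j)) x := by
      have heq : (fun t => Ω t j i) = fun t => -(Ω t i j) := by
        funext t
        have := congrFun (congrFun (hΩskew t) i) j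
        simpa [Matrix.transpose_apply, Matrix.neg_apply] using this
      rw [heq]
      exact (hΩ x i j).neg
    have := (hΩ x j i).unique h1
    simpa [Matrix.transpose_apply, Matrix.neg_apply] using this
  intro x
  have key : J * Ω' x + Ω' x * J
      = J * (Ω x * Ω x) - (Ω x * Ω x) * J - (P x * J - J * P x) := by
    have h := hrigid x
    rw [hM' x] at h
    rw [h]; noncomm_ring
  have hT : ((Ω x) ^ 2 - Ω' x + P x)ᵀ = Ω x * Ω x + Ω' x + P x := by
    rw [transpose_add, transpose_sub, sq, transpose_mul, hΩskew, hΩ'skew, hPsymm]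
    noncomm_ring
  rw [hT]
  have hmain : (Ω x * Ω x + Ω' x + P x) * J - J * ((Ω x) ^ 2 - Ω' x + P x)
      = (J * Ω' x + Ω' x * J)
        - (J * (Ω x * Ω x) - (Ω x * Ω x) * J - (P x * J - J * P x)) := by
    rw [sq]; noncomm_ring
  rw [key, sub_self] at hmain
  exact sub_eq_zero.mp hmain
end

section
/- Let d ≥ 1, let J ∈ M_d(ℝ) be a constant symmetric positive definite matrix and let j > 0 be such that ⟨v, Jv⟩ ≥ j‖v‖² for all v ∈ ℂ^d. Let Ω : ℝ → M_d(ℝ) be continuous with Ω(x)ᵀ = −Ω(x) for all x, let μ ∈ ℂ with Re(μ) > 0, and let ψ : ℝ → ℂ^d be differentiable with ψ'(x) = (μJ − Ω(x))ψ(x) and ψ(x₀) ≠ 0 for some x₀ ∈ ℝ. Then ‖ψ(x)‖² ≥ ‖ψ(x₀)‖²·exp(2·Re(μ)·j·(x − x₀)) for all x ≥ x₀; in particular ψ is unbounded on ℝ. -/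
open Matrix

lemma hasDerivAt_normSq_comp {f : ℝ → ℂ} {f' : ℂ} {x : ℝ} (hf : HasDerivAt f f' x) :
    HasDerivAt (fun t => Complex.normSq (f t)) (2 * ((starRingEnd ℂ) (f x) * f').re) x := by
  have hre : HasDerivAt (fun t => (f t).re) f'.re x :=
    Complex.reCLM.hasFDerivAt.comp_hasDerivAt x hf
  have him : HasDerivAt (fun t => (f t).im) f'.im x :=
    Complex.imCLM.hasFDerivAt.comp_hasDerivAt x hf
  have h := (hre.fun_mul hre).fun_add (him.fun_mul him)
  have heq : (fun t => Complex.normSq (f t))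
      = fun t => (f t).re * (f t).re + (f t).im * (f t).im := by
    funext t; rw [Complex.normSq_apply]
  rw [heq]
  refine h.congr_deriv ?_
  simp [Complex.mul_re]; ring

lemma conj_quad {d : ℕ} (M : Matrix (Fin d) (Fin d) ℝ) (v : Fin d → ℂ) :
    (starRingEnd ℂ) (star v ⬝ᵥ (M.map (fun r : ℝ => (r : ℂ))).mulVec v)
      = star v ⬝ᵥ ((Mᵀ).map (fun r : ℝ => (r : ℂ))).mulVec v := by
  simp only [dotProduct, mulVec, Matrix.map_apply, Matrix.transpose_apply, Pi.star_apply,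
    Finset.mul_sum, map_sum]
  rw [Finset.sum_comm]
  refine Finset.sum_congr rfl fun i _ => Finset.sum_congr rfl fun k _ => ?_
  rw [_root_.map_mul, _root_.map_mul]
  simp only [Complex.conj_ofReal, RingHomCompTriple.comp_apply]
  rw [show (starRingEnd ℂ) (star (v k)) = v k from Complex.conj_conj _]
  rw [Complex.star_def]; ring

/-- If `ψ' = (μJ - Ω)ψ` with `J` real symmetric positive definite,
`⟨v, Jv⟩ ≥ j‖v‖²` for all `v ∈ ℂ^d` with `j > 0`, `Ω(x)` real skew-symmetric continuous,
`Re μ > 0`, and `ψ(x₀) ≠ 0`, then `‖ψ(x)‖² ≥ ‖ψ(x₀)‖²·exp(2·Re(μ)·j·(x - x₀))` for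
`x ≥ x₀`; in particular `ψ` is unbounded. Here `‖ψ‖² = Σₖ |ψₖ|²`. -/
theorem bloch_solution_unbounded_of_re_pos
    (d : ℕ) (hd : 1 ≤ d)
    (J : Matrix (Fin d) (Fin d) ℝ) (hJsymm : J.IsSymm) (hJpd : J.PosDef)
    (j : ℝ) (hj : 0 < j)
    (hlb : ∀ v : Fin d → ℂ,
      j * ∑ k, Complex.normSq (v k)
        ≤ (star v ⬝ᵥ (J.map (fun r : ℝ => (r : ℂ))).mulVec v).re)
    (Ω : ℝ → Matrix (Fin d) (Fin d) ℝ)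
    (hΩcont : ∀ i j', Continuous fun x => Ω x i j')
    (hΩskew : ∀ x, (Ω x)ᵀ = -(Ω x))
    (μ : ℂ) (hμ : 0 < μ.re)
    (ψ : ℝ → Fin d → ℂ)
    (hψ : ∀ x i, HasDerivAt (fun t => ψ t i)
        (((μ • (J.map (fun r : ℝ => (r : ℂ)))
            - (Ω x).map (fun r : ℝ => (r : ℂ))).mulVec (ψ x)) i) x)
    (x₀ : ℝ) (hψ0 : ψ x₀ ≠ 0) :
    (∀ x, x₀ ≤ x →
      (∑ k, Complex.normSq (ψ x₀ k)) * Real.exp (2 * μ.re * j * (x - x₀))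
        ≤ ∑ k, Complex.normSq (ψ x k))
    ∧ ¬ ∃ Cb : ℝ, ∀ x : ℝ, ∑ k, Complex.normSq (ψ x k) ≤ Cb := by
  set Jc : Matrix (Fin d) (Fin d) ℂ := J.map (fun r : ℝ => (r : ℂ)) with hJc
  set c : ℝ := 2 * μ.re * j with hc
  have hcpos : 0 < c := by positivity
  set E : ℝ → ℝ := fun t => ∑ k, Complex.normSq (ψ t k) with hE
  set A : ℝ → Matrix (Fin d) (Fin d) ℂ :=
    fun x => μ • Jc - (Ω x).map (fun r : ℝ => (r : ℂ)) with hA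
  set D : ℝ → ℝ := fun x => 2 * (star (ψ x) ⬝ᵥ (A x).mulVec (ψ x)).re with hD
  -- derivative of E
  have hEderiv : ∀ x, HasDerivAt E (D x) x := by
    intro x
    have h := HasDerivAt.fun_sum (u := Finset.univ)
      (fun k _ => hasDerivAt_normSq_comp (hψ x k))
    refine h.congr_deriv ?_
    simp only [hD, dotProduct, Pi.star_apply, Complex.re_sum, Finset.mul_sum]
    refine Finset.sum_congr rfl fun k _ => ?_
    rw [Complex.star_def]
  -- lower bound on D
  have hkey : ∀ x, c * E x ≤ D x := by
    intro x
    set v := ψ x with hv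
    set q : ℂ := star v ⬝ᵥ Jc.mulVec v with hq
    set ω : ℂ := star v ⬝ᵥ ((Ω x).map (fun r : ℝ => (r : ℂ))).mulVec v with hω
    have hsplit : star v ⬝ᵥ (A x).mulVec v = μ * q - ω := by
      rw [hA]
      rw [sub_mulVec, dotProduct_sub, smul_mulVec, dotProduct_smul]
      simp [hq, hω, smul_eq_mul]
    have hqim : q.im = 0 := by
      have h1 := conj_quad J v
      rw [hJsymm.eq] at h1
      have : (starRingEnd ℂ) q = q := h1
      exact Complex.conj_eq_iff_im.mp this
    have hωre : ω.re = 0 := by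
      have h1 := conj_quad (Ω x) v
      rw [hΩskew x] at h1
      have hneg : ((-(Ω x)).map (fun r : ℝ => (r : ℂ))) = -((Ω x).map (fun r : ℝ => (r : ℂ))) := by
        ext i k; simp
      rw [hneg] at h1
      have h2 : (starRingEnd ℂ) ω = -ω := by
        rw [hω, h1]; simp [Matrix.neg_mulVec]
      have := congrArg Complex.re h2
      simp only [Complex.conj_re, Complex.neg_re] at this
      linarith
    have hqre : j * E x ≤ q.re := hlb v
    have : D x = 2 * (μ.re * q.re) := by
      rw [hD]
      simp only [← hv, hsplit, Complex.sub_re, Complex.mul_re, hqim, hωre]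
      ring
    rw [this, hc]
    have hEnn : 0 ≤ E x := Finset.sum_nonneg fun k _ => Complex.normSq_nonneg _
    nlinarith [hμ.le, hqre]
  -- the weighted function F is monotone
  set F : ℝ → ℝ := fun t => E t * Real.exp (-c * (t - x₀)) with hF
  have hFderiv : ∀ x, HasDerivAt F ((D x - c * E x) * Real.exp (-c * (x - x₀))) x := by
    intro x
    have hinner : HasDerivAt (fun t => -c * (t - x₀)) (-c) x := by
      simpa using ((hasDerivAt_id x).sub_const x₀).const_mul (-c)
    have hg : HasDerivAt (fun t => Real.exp (-c * (t - x₀)))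
        (Real.exp (-c * (x - x₀)) * (-c)) x := hinner.exp
    have := (hEderiv x).fun_mul hg
    refine this.congr_deriv ?_
    ring
  have hmono : Monotone F :=
    monotone_of_deriv_nonneg (fun x => (hFderiv x).differentiableAt)
      (fun x => by
        rw [(hFderiv x).deriv]
        have h1 := hkey x
        have h2 := (Real.exp_pos (-c * (x - x₀))).le
        nlinarith)
  have hmain : ∀ x, x₀ ≤ x → E x₀ * Real.exp (c * (x - x₀)) ≤ E x := by
    intro x hx
    have h1 : F x₀ ≤ F x := hmono hx
    have h2 : F x₀ = E x₀ := by simp [hF]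
    have h3 : E x₀ ≤ E x * Real.exp (-c * (x - x₀)) := by rw [← h2]; exact h1
    have h4 := mul_le_mul_of_nonneg_right h3 (Real.exp_pos (c * (x - x₀))).le
    calc E x₀ * Real.exp (c * (x - x₀))
        ≤ E x * Real.exp (-c * (x - x₀)) * Real.exp (c * (x - x₀)) := h4
      _ = E x := by rw [mul_assoc, ← Real.exp_add]; ring_nf; simp
  have hE₀pos : 0 < E x₀ := by
    obtain ⟨k, hk⟩ := Function.ne_iff.mp hψ0
    have h1 : 0 < Complex.normSq (ψ x₀ k) := Complex.normSq_pos.mpr hk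
    have h2 : Complex.normSq (ψ x₀ k) ≤ E x₀ :=
      Finset.single_le_sum (fun i _ => Complex.normSq_nonneg _) (Finset.mem_univ k)
    linarith
  refine ⟨hmain, ?_⟩
  rintro ⟨Cb, hCb⟩
  set t : ℝ := max (Cb / (E x₀ * c)) 0 + 1 with ht
  have ht0 : 0 ≤ t := by positivity
  have h1 : Cb / (E x₀ * c) < t :=
    lt_of_le_of_lt (le_max_left _ _) (by rw [ht]; exact lt_add_one _)
  have h2 : Cb < t * (E x₀ * c) := (div_lt_iff₀ (by positivity)).mp h1
  have h3 : c * t + 1 ≤ Real.exp (c * t) := Real.add_one_le_exp _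
  have h4 := hmain (x₀ + t) (by linarith)
  rw [show x₀ + t - x₀ = t from by ring] at h4
  have h5 := hCb (x₀ + t)
  have h6 : E x₀ * (c * t + 1) ≤ E x₀ * Real.exp (c * t) :=
    mul_le_mul_of_nonneg_left h3 hE₀pos.le
  nlinarith
end

section
/- Let α, κ ∈ ℝ and let f, g, h : ℝ → ℝ be differentiable functions satisfying f' = α − κ(f + h)g, h' = α + κ(f + h)g, 2g' = κ(f² − h²). Then the functions x ↦ f(x) + h(x) − 2αx and x ↦ (f(x) − h(x))² + 4g(x)² are constant. -/
lemma const_of_hasDerivAt_zero {F : ℝ → ℝ} (hF : ∀ x, HasDerivAt F 0 x) (x y : ℝ) :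
    F x = F y :=
  is_const_of_deriv_eq_zero (fun t => (hF t).differentiableAt)
    (fun t => (hF t).deriv) x y

/-- For the system `f' = α - κ(f+h)g`, `h' = α + κ(f+h)g`,
`2g' = κ(f² - h²)`, the functions `f + h - 2αx` and `(f-h)² + 4g²` are constant. -/
theorem selfadjoint_reduction_first_integrals
    (α κ : ℝ) (f g h : ℝ → ℝ)
    (hf : ∀ x, HasDerivAt f (α - κ * (f x + h x) * g x) x)
    (hh : ∀ x, HasDerivAt h (α + κ * (f x + h x) * g x) x)
    (hg : ∀ x, HasDerivAt (fun t => 2 * g t) (κ * (f x ^ 2 - h x ^ 2)) x) :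
    (∀ x y : ℝ, f x + h x - 2 * α * x = f y + h y - 2 * α * y)
    ∧ (∀ x y : ℝ, (f x - h x) ^ 2 + 4 * g x ^ 2 = (f y - h y) ^ 2 + 4 * g y ^ 2) := by
  have hg' : ∀ x, HasDerivAt g (κ * (f x ^ 2 - h x ^ 2) / 2) x := by
    intro x
    have := (hg x).const_mul (1/2 : ℝ)
    have heq : (fun t => (1/2 : ℝ) * (2 * g t)) = g := by funext t; ring
    rw [heq] at this
    exact this.congr_deriv (by ring)
  constructor
  · intro x y
    have key : ∀ x, HasDerivAt (fun t => f t + h t - 2 * α * t) 0 x := by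
      intro x
      have := ((hf x).add (hh x)).sub ((hasDerivAt_id x).const_mul (2*α))
      exact this.congr_deriv (by ring)
    exact const_of_hasDerivAt_zero key x y
  · intro x y
    have key : ∀ x, HasDerivAt (fun t => (f t - h t) ^ 2 + 4 * g t ^ 2) 0 x := by
      intro x
      have h1 := ((hf x).sub (hh x)).pow 2
      have h2 := ((hg' x).pow 2).const_mul 4
      have := h1.add h2
      exact this.congr_deriv (by simp only [Pi.sub_apply]; push_cast; ring)
    exact const_of_hasDerivAt_zero key x y
end

section
/- Let A, λ, ρ ∈ ℂ. Define ψ : ℝ → ℂ² by ψ(x) = Q(x) · e^{iρx} · (2iρ, λ − A − 1 − ρ²)ᵀ, where Q(x) is the rotation matrix with rows (cos x, −sin x) and (sin x, cos x), and define the matrix potential U(x) = A·[[cos 2x, sin 2x],[sin 2x, −cos 2x]]. Then ψ satisfies the matrix Schrödinger equation −ψ'' + U(x)ψ = λψ for all x ∈ ℝ if and only if ρ⁴ − 2(λ + 1)ρ² + (λ − 1)² − A² = 0. -/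
open Matrix

lemma aux_deriv (ρ a b : ℂ) :
    deriv (fun t : ℝ => Complex.exp (Complex.I * ρ * t) * (a * Complex.cos t + b * Complex.sin t))
    = fun t : ℝ => Complex.exp (Complex.I * ρ * t) *
        ((Complex.I * ρ * a + b) * Complex.cos t + (Complex.I * ρ * b - a) * Complex.sin t) := by
  funext x
  have h1 : HasDerivAt (fun t : ℝ => Complex.exp (Complex.I * ρ * t))
      (Complex.I * ρ * Complex.exp (Complex.I * ρ * x)) x := by
    have := ((Complex.hasDerivAt_exp (Complex.I * ρ * x)).comp (x : ℂ)
      ((hasDerivAt_id (x : ℂ)).const_mul (Complex.I * ρ))).comp_ofReal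
    simpa [mul_comm] using this
  have h2 : HasDerivAt (fun t : ℝ => a * Complex.cos t + b * Complex.sin t)
      (a * (-Complex.sin x) + b * Complex.cos x) x :=
    (((Complex.hasDerivAt_cos (x : ℂ)).comp_ofReal).const_mul a).add
      (((Complex.hasDerivAt_sin (x : ℂ)).comp_ofReal).const_mul b)
  rw [show (fun t : ℝ => Complex.exp (Complex.I * ρ * t) * (a * Complex.cos t + b * Complex.sin t)) = (fun t : ℝ => Complex.exp (Complex.I * ρ * t)) * (fun t : ℝ => a * Complex.cos t + b * Complex.sin t) from rfl, (h1.mul h2).deriv]; ring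

/-- The Bloch-type vector function
`ψ(x) = Q(x)·e^{iρx}·(2iρ, λ - A - 1 - ρ²)ᵀ`, with `Q(x)` the rotation matrix by angle
`x`, satisfies `-ψ'' + U ψ = λψ` for the pseudo-Mathieu potential
`U(x) = A[[cos 2x, sin 2x],[sin 2x, -cos 2x]]` iff
`ρ⁴ - 2(λ+1)ρ² + (λ-1)² - A² = 0`. -/
theorem pseudo_mathieu_bloch_solutions
    (A lam ρ : ℂ) (ψ : ℝ → Fin 2 → ℂ)
    (hψ : ∀ x : ℝ, ψ x = Complex.exp (Complex.I * ρ * x) •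
        (!![Complex.cos x, -Complex.sin x;
            Complex.sin x, Complex.cos x]).mulVec
          ![2 * Complex.I * ρ, lam - A - 1 - ρ ^ 2]) :
    (∀ (x : ℝ) (i : Fin 2),
      -(deriv (fun t : ℝ => deriv (fun s : ℝ => ψ s i) t) x)
        + ((A • !![Complex.cos (2 * x), Complex.sin (2 * x);
                   Complex.sin (2 * x), -Complex.cos (2 * x)]).mulVec (ψ x)) i
      = lam * ψ x i)
    ↔ ρ ^ 4 - 2 * (lam + 1) * ρ ^ 2 + (lam - 1) ^ 2 - A ^ 2 = 0 := by
  set c : ℂ := lam - A - 1 - ρ ^ 2 with hc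
  set a : ℂ := 2 * Complex.I * ρ with ha
  have hψ0 : (fun s : ℝ => ψ s 0) = fun s : ℝ =>
      Complex.exp (Complex.I * ρ * s) * (a * Complex.cos s + (-c) * Complex.sin s) := by
    funext s
    rw [hψ s]
    simp [Matrix.mulVec, dotProduct, Fin.sum_univ_two] <;> ring
  have hψ1 : (fun s : ℝ => ψ s 1) = fun s : ℝ =>
      Complex.exp (Complex.I * ρ * s) * (c * Complex.cos s + a * Complex.sin s) := by
    funext s
    rw [hψ s]
    simp [Matrix.mulVec, dotProduct, Fin.sum_univ_two] <;> ring
  have hdd0 : deriv (fun t : ℝ => deriv (fun s : ℝ => ψ s 0) t) = fun t : ℝ =>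
      Complex.exp (Complex.I * ρ * t) *
        ((Complex.I * ρ * (Complex.I * ρ * a + (-c)) + (Complex.I * ρ * (-c) - a)) * Complex.cos t
          + (Complex.I * ρ * (Complex.I * ρ * (-c) - a) - (Complex.I * ρ * a + (-c))) * Complex.sin t) := by
    rw [show (fun t : ℝ => deriv (fun s : ℝ => ψ s 0) t) = deriv (fun s : ℝ => ψ s 0) from rfl,
      hψ0, aux_deriv, aux_deriv]
  have hdd1 : deriv (fun t : ℝ => deriv (fun s : ℝ => ψ s 1) t) = fun t : ℝ =>
      Complex.exp (Complex.I * ρ * t) *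
        ((Complex.I * ρ * (Complex.I * ρ * c + a) + (Complex.I * ρ * a - c)) * Complex.cos t
          + (Complex.I * ρ * (Complex.I * ρ * a - c) - (Complex.I * ρ * c + a)) * Complex.sin t) := by
    rw [show (fun t : ℝ => deriv (fun s : ℝ => ψ s 1) t) = deriv (fun s : ℝ => ψ s 1) from rfl,
      hψ1, aux_deriv, aux_deriv]
  have key0 : ∀ x : ℝ,
      -(deriv (fun t : ℝ => deriv (fun s : ℝ => ψ s 0) t) x)
        + ((A • !![Complex.cos (2 * x), Complex.sin (2 * x);
                   Complex.sin (2 * x), -Complex.cos (2 * x)]).mulVec (ψ x)) 0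
        - lam * ψ x 0
      = Complex.exp (Complex.I * ρ * x) * Complex.sin x *
          (ρ ^ 4 - 2 * (lam + 1) * ρ ^ 2 + (lam - 1) ^ 2 - A ^ 2) := by
    intro x
    have e1 : Complex.cos (2 * x) = Complex.cos x * Complex.cos x - Complex.sin x * Complex.sin x := by
      rw [two_mul, Complex.cos_add]
    have e2 : Complex.sin (2 * x) = Complex.sin x * Complex.cos x + Complex.cos x * Complex.sin x := by
      rw [two_mul, Complex.sin_add]
    rw [hdd0, hψ x]
    simp [Matrix.mulVec, dotProduct, Fin.sum_univ_two, Matrix.smul_apply,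
      smul_eq_mul, e1, e2, hc, ha]
    linear_combination (A * Complex.exp (Complex.I * ρ * x) *
      ((2 * Complex.I * ρ) * Complex.cos x + (lam - A - 1 - ρ ^ 2) * Complex.sin x)) *
      (Complex.sin_sq_add_cos_sq (x : ℂ))
      + (Complex.exp (Complex.I * ρ * x) * ρ ^ 2 *
          (lam * Complex.sin x - A * Complex.sin x + 3 * Complex.sin x - ρ ^ 2 * Complex.sin x
            - 2 * Complex.I * ρ * Complex.cos x)) * Complex.I_sq
  have key1 : ∀ x : ℝ,
      -(deriv (fun t : ℝ => deriv (fun s : ℝ => ψ s 1) t) x)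
        + ((A • !![Complex.cos (2 * x), Complex.sin (2 * x);
                   Complex.sin (2 * x), -Complex.cos (2 * x)]).mulVec (ψ x)) 1
        - lam * ψ x 1
      = Complex.exp (Complex.I * ρ * x) * (-Complex.cos x) *
          (ρ ^ 4 - 2 * (lam + 1) * ρ ^ 2 + (lam - 1) ^ 2 - A ^ 2) := by
    intro x
    have e1 : Complex.cos (2 * x) = Complex.cos x * Complex.cos x - Complex.sin x * Complex.sin x := by
      rw [two_mul, Complex.cos_add]
    have e2 : Complex.sin (2 * x) = Complex.sin x * Complex.cos x + Complex.cos x * Complex.sin x := by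
      rw [two_mul, Complex.sin_add]
    rw [hdd1, hψ x]
    simp [Matrix.mulVec, dotProduct, Fin.sum_univ_two, Matrix.smul_apply,
      smul_eq_mul, e1, e2, hc, ha]
    linear_combination (A * Complex.exp (Complex.I * ρ * x) *
      ((2 * Complex.I * ρ) * Complex.sin x - (lam - A - 1 - ρ ^ 2) * Complex.cos x)) *
      (Complex.sin_sq_add_cos_sq (x : ℂ))
      + (Complex.exp (Complex.I * ρ * x) * ρ ^ 2 *
          (-lam * Complex.cos x + A * Complex.cos x - 3 * Complex.cos x + ρ ^ 2 * Complex.cos x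
            - 2 * Complex.I * ρ * Complex.sin x)) * Complex.I_sq
  constructor
  · intro h
    have h0 := key0 (Real.pi / 2)
    rw [h (Real.pi / 2) 0] at h0
    have hs : Complex.sin ((Real.pi / 2 : ℝ) : ℂ) = 1 := by
      rw [← Complex.ofReal_sin, Real.sin_pi_div_two, Complex.ofReal_one]
    rw [hs, sub_self, mul_one] at h0
    have := h0.symm
    rcases mul_eq_zero.mp this with he | hp
    · exact absurd he (Complex.exp_ne_zero _)
    · exact hp
  · intro hP x i
    have h0 := key0 x
    have h1 := key1 x
    rw [hP, mul_zero] at h0 h1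
    have g0 : -(deriv (fun t : ℝ => deriv (fun s : ℝ => ψ s 0) t) x)
        + ((A • !![Complex.cos (2 * x), Complex.sin (2 * x);
                   Complex.sin (2 * x), -Complex.cos (2 * x)]).mulVec (ψ x)) 0
        = lam * ψ x 0 := by linear_combination h0
    have g1 : -(deriv (fun t : ℝ => deriv (fun s : ℝ => ψ s 1) t) x)
        + ((A • !![Complex.cos (2 * x), Complex.sin (2 * x);
                   Complex.sin (2 * x), -Complex.cos (2 * x)]).mulVec (ψ x)) 1
        = lam * ψ x 1 := by linear_combination h1
    fin_cases i
    · exact g0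
    · exact g1
end

section
/- Let d ≥ 1, let F : ℝ → M_d(ℂ) be differentiable, C ∈ M_d(ℂ) a constant invertible matrix, and α ∈ ℂ, such that CF' + F'C = [C, F²] + 2αC (the period-one matrix dressing chain with B = 0). Set U := F² − F'. If λ ∈ ℂ and ψ : ℝ → ℂ^d is twice differentiable with −ψ'' + Uψ = λψ, then the function ψ̃ := −(Cψ)' + F·(Cψ) satisfies −ψ̃'' + Uψ̃ = (λ + 2α)ψ̃. -/
open Matrix

private lemma hasDerivAt_mulVec_apply {d : ℕ}
    (M : ℝ → Matrix (Fin d) (Fin d) ℂ) (M' : Matrix (Fin d) (Fin d) ℂ)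
    (v : ℝ → Fin d → ℂ) (v' : Fin d → ℂ) (x : ℝ) (i : Fin d)
    (hM : ∀ j, HasDerivAt (fun t => M t i j) (M' i j) x)
    (hv : ∀ j, HasDerivAt (fun t => v t j) (v' j) x) :
    HasDerivAt (fun t => (M t).mulVec (v t) i)
      (M'.mulVec (v x) i + (M x).mulVec v' i) x := by
  have h := HasDerivAt.fun_sum (u := Finset.univ) (fun j _ => (hM j).mul (hv j))
  simpa [Matrix.mulVec, dotProduct, Finset.sum_add_distrib] using h

/-- For the period-one matrix dressing chain with `B = 0`,
`CF' + F'C = [C, F²] + 2αC` (with `C` invertible), and `U = F² - F'`, the raising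
operator `ĀC` shifts the spectral parameter: if `-ψ'' + Uψ = λψ` then
`ψ̃ = -(Cψ)' + F·(Cψ)` satisfies `-ψ̃'' + Uψ̃ = (λ + 2α)ψ̃`. -/
theorem raising_operator_shifts_spectrum
    (d : ℕ) (hd : 1 ≤ d)
    (F F' : ℝ → Matrix (Fin d) (Fin d) ℂ)
    (C : Matrix (Fin d) (Fin d) ℂ) (hC : IsUnit C) (α : ℂ)
    (hF : ∀ x i j, HasDerivAt (fun t => F t i j) (F' x i j) x)
    (hchain : ∀ x, C * F' x + F' x * C
        = (C * (F x) ^ 2 - (F x) ^ 2 * C) + (2 * α) • C)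
    (lam : ℂ) (ψ ψ' ψ'' : ℝ → Fin d → ℂ)
    (hψ : ∀ x i, HasDerivAt (fun t => ψ t i) (ψ' x i) x)
    (hψ' : ∀ x i, HasDerivAt (fun t => ψ' t i) (ψ'' x i) x)
    (hSch : ∀ x, -(ψ'' x) + ((F x) ^ 2 - F' x).mulVec (ψ x) = lam • ψ x) :
    ∀ x i,
      -(deriv (fun t => deriv (fun s =>
          (-(C.mulVec (ψ' s)) + (F s).mulVec (C.mulVec (ψ s))) i) t) x)
      + (((F x) ^ 2 - F' x).mulVec
          (-(C.mulVec (ψ' x)) + (F x).mulVec (C.mulVec (ψ x)))) i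
      = (lam + 2 * α) * (-(C.mulVec (ψ' x)) + (F x).mulVec (C.mulVec (ψ x))) i := by
  -- derivatives of C·ψ and C·ψ'
  have hp : ∀ t i, HasDerivAt (fun s => C.mulVec (ψ s) i) (C.mulVec (ψ' t) i) t := by
    intro t i
    have h := hasDerivAt_mulVec_apply (fun _ => C) 0 ψ (ψ' t) t i
      (fun j => hasDerivAt_const _ _) (fun j => hψ t j)
    simpa using h
  have hq : ∀ t i, HasDerivAt (fun s => C.mulVec (ψ' s) i) (C.mulVec (ψ'' t) i) t := by
    intro t i
    have h := hasDerivAt_mulVec_apply (fun _ => C) 0 ψ' (ψ'' t) t i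
      (fun j => hasDerivAt_const _ _) (fun j => hψ' t j)
    simpa using h
  -- key identity: C ψ'' expressed with F on the left of C
  have key : ∀ t, C.mulVec (ψ'' t)
      = (F t).mulVec ((F t).mulVec (C.mulVec (ψ t)))
        + (F' t).mulVec (C.mulVec (ψ t)) - (lam + 2 * α) • C.mulVec (ψ t) := by
    intro t
    have h1 : ψ'' t = ((F t) ^ 2 - F' t).mulVec (ψ t) - lam • ψ t := by
      rw [eq_sub_iff_add_eq, ← hSch t]; abel
    have h2 : C * F' t = (C * (F t) ^ 2 - (F t) ^ 2 * C) + (2 * α) • C - F' t * C :=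
      eq_sub_of_add_eq (hchain t)
    have hm : C * ((F t) ^ 2 - F' t) = (F t) ^ 2 * C + F' t * C - (2 * α) • C := by
      rw [mul_sub, h2]; abel
    rw [h1, Matrix.mulVec_sub, Matrix.mulVec_smul, Matrix.mulVec_mulVec, hm]
    simp only [Matrix.sub_mulVec, Matrix.add_mulVec, Matrix.smul_mulVec,
      Matrix.mulVec_mulVec, pow_two, mul_assoc]
    module
  -- first derivative of ψ̃
  set E : ℝ → Fin d → ℂ := fun t =>
    (lam + 2 * α) • C.mulVec (ψ t)
      - (F t).mulVec ((F t).mulVec (C.mulVec (ψ t)))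
      + (F t).mulVec (C.mulVec (ψ' t)) with hE
  have hD1 : ∀ t i, HasDerivAt
      (fun s => (-(C.mulVec (ψ' s)) + (F s).mulVec (C.mulVec (ψ s))) i) (E t i) t := by
    intro t i
    have h1 := (hq t i).neg
    have h2 := hasDerivAt_mulVec_apply F (F' t) (fun s => C.mulVec (ψ s))
      (C.mulVec (ψ' t)) t i (fun j => hF t i j) (fun j => hp t j)
    have h := h1.add h2
    have heq : -(C.mulVec (ψ'' t) i)
        + ((F' t).mulVec (C.mulVec (ψ t)) i + (F t).mulVec (C.mulVec (ψ' t)) i)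
        = E t i := by
      have := congrFun (key t) i
      simp only [hE, Pi.add_apply, Pi.sub_apply, Pi.smul_apply, smul_eq_mul] at this ⊢
      rw [this]; ring
    rw [heq] at h
    exact h
  intro x i
  have hinner : (fun t => deriv (fun s =>
      (-(C.mulVec (ψ' s)) + (F s).mulVec (C.mulVec (ψ s))) i) t) = fun t => E t i :=
    funext fun t => (hD1 t i).deriv
  rw [hinner]
  -- second derivative
  set p : Fin d → ℂ := C.mulVec (ψ x) with hpdef
  set q : Fin d → ℂ := C.mulVec (ψ' x) with hqdef
  set E' : Fin d → ℂ :=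
    (lam + 2 * α) • C.mulVec (ψ' x)
      - ((F' x).mulVec ((F x).mulVec p)
          + (F x).mulVec ((F' x).mulVec p + (F x).mulVec q))
      + ((F' x).mulVec q + (F x).mulVec (C.mulVec (ψ'' x))) with hE'
  have hDE : HasDerivAt (fun t => E t i) (E' i) x := by
    have t1 : HasDerivAt (fun t => (lam + 2 * α) * (C.mulVec (ψ t) i))
        ((lam + 2 * α) * (C.mulVec (ψ' x) i)) x := (hp x i).const_mul _
    have inner : ∀ j, HasDerivAt (fun s => (F s).mulVec (C.mulVec (ψ s)) j)
        (((F' x).mulVec p + (F x).mulVec q) j) x := fun j =>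
      hasDerivAt_mulVec_apply F (F' x) (fun s => C.mulVec (ψ s)) q x j
        (fun k => hF x j k) (fun k => hp x k)
    have t2 := hasDerivAt_mulVec_apply F (F' x)
      (fun s => (F s).mulVec (C.mulVec (ψ s))) ((F' x).mulVec p + (F x).mulVec q) x i
      (fun j => hF x i j) inner
    have t3 := hasDerivAt_mulVec_apply F (F' x) (fun s => C.mulVec (ψ' s))
      (C.mulVec (ψ'' x)) x i (fun j => hF x i j) (fun j => hq x j)
    exact ((t1.sub t2).add t3)
  rw [hDE.deriv]
  -- final algebraic identity, proved at the level of vectors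
  have final : -E' + ((F x) ^ 2 - F' x).mulVec (-q + (F x).mulVec p)
      = (lam + 2 * α) • (-q + (F x).mulVec p) := by
    have hr := key x
    rw [hE', hr, hpdef, hqdef]
    simp only [Matrix.sub_mulVec, Matrix.add_mulVec, Matrix.mulVec_add,
      Matrix.mulVec_sub, Matrix.mulVec_neg, Matrix.mulVec_smul,
      Matrix.smul_mulVec, Matrix.mulVec_mulVec, pow_two, sub_mul, mul_sub,
      add_mul, mul_add, mul_assoc]
    module
  have := congrFun final i
  simpa only [Pi.add_apply, Pi.neg_apply, Pi.smul_apply, smul_eq_mul] using this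
end

section
/- Let k, γ ∈ ℝ with k ≠ 0 and let φ : ℝ → ℂ be a twice differentiable function satisfying φ''(x) − 2iγx·φ'(x) − k²φ(x) = 0 for all x ∈ ℝ. Then there exists a constant C > 0 such that |φ(x)| ≤ C·e^{|k|·|x|} for all x ∈ ℝ. -/
private lemma hasDerivAt_normSq' (f f' : ℝ → ℂ) (x : ℝ) (hf : HasDerivAt f (f' x) x) :
    HasDerivAt (fun y => Complex.normSq (f y)) (2 * ((starRingEnd ℂ (f x)) * f' x).re) x := by
  have hre : HasDerivAt (fun y => (f y).re) ((f' x).re) x :=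
    (Complex.reCLM.hasFDerivAt.comp_hasDerivAt x hf)
  have him : HasDerivAt (fun y => (f y).im) ((f' x).im) x :=
    (Complex.imCLM.hasFDerivAt.comp_hasDerivAt x hf)
  have h := (hre.mul hre).add (him.mul him)
  simp only [Complex.normSq_apply]
  refine h.congr_deriv ?_
  simp [Complex.mul_re]
  ring

/-- Every solution of `φ'' - 2iγx·φ' - k²φ = 0` (with real `k ≠ 0`, `γ`)
satisfies `|φ(x)| ≤ C·e^{|k||x|}` for some constant `C > 0`. -/
theorem weber_type_equation_growth_bound
    (k γ : ℝ) (hk : k ≠ 0) (φ φ' φ'' : ℝ → ℂ)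
    (hφ : ∀ x, HasDerivAt φ (φ' x) x)
    (hφ' : ∀ x, HasDerivAt φ' (φ'' x) x)
    (heq : ∀ x : ℝ, φ'' x - 2 * Complex.I * (γ : ℂ) * (x : ℂ) * φ' x
        - (k : ℂ) ^ 2 * φ x = 0) :
    ∃ C : ℝ, 0 < C ∧ ∀ x : ℝ, ‖φ x‖ ≤ C * Real.exp (|k| * |x|) := by
  have hka : (0:ℝ) < |k| := abs_pos.mpr hk
  set E : ℝ → ℝ := fun x => Complex.normSq (φ' x) + k^2 * Complex.normSq (φ x) with hEdef
  set D : ℝ → ℝ := fun x => 4 * k^2 * ((starRingEnd ℂ (φ x)) * φ' x).re with hDdef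
  have hE : ∀ x, HasDerivAt E (D x) x := by
    intro x
    have h1 := hasDerivAt_normSq' φ' φ'' x (hφ' x)
    have h2 := (hasDerivAt_normSq' φ φ' x (hφ x)).const_mul (k^2)
    have h := h1.add h2
    refine h.congr_deriv ?_
    have heqx : φ'' x = 2 * Complex.I * (γ:ℂ) * (x:ℂ) * φ' x + (k:ℂ)^2 * φ x := by
      have := heq x; linear_combination this
    rw [heqx]
    simp [hDdef, Complex.mul_re, Complex.mul_im, Complex.conj_re, Complex.conj_im,
      Complex.I_re, Complex.I_im, ← Complex.ofReal_pow, Complex.ofReal_re, Complex.ofReal_im]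
    ring
  have hEnonneg : ∀ x, 0 ≤ E x := by
    intro x
    have := Complex.normSq_nonneg (φ' x)
    have h2 := Complex.normSq_nonneg (φ x)
    positivity
  have hDbound : ∀ x, |D x| ≤ 2 * |k| * E x := by
    intro x
    have h1 : |((starRingEnd ℂ (φ x)) * φ' x).re| ≤ ‖φ x‖ * ‖φ' x‖ := by
      calc |((starRingEnd ℂ (φ x)) * φ' x).re| ≤ ‖(starRingEnd ℂ (φ x)) * φ' x‖ :=
            Complex.abs_re_le_norm _
        _ = ‖φ x‖ * ‖φ' x‖ := by
            rw [norm_mul, Complex.norm_conj]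
    have h2 : 2 * (|k| * ‖φ x‖) * ‖φ' x‖
        ≤ (|k| * ‖φ x‖)^2 + (‖φ' x‖)^2 := two_mul_le_add_sq _ _
    have habs : |D x| ≤ 4 * k^2 * (‖φ x‖ * ‖φ' x‖) := by
      rw [hDdef, abs_mul, _root_.abs_of_nonneg (by positivity : (0:ℝ) ≤ 4 * k^2)]
      exact mul_le_mul_of_nonneg_left h1 (by positivity)
    refine habs.trans ?_
    have : 4 * k^2 * (‖φ x‖ * ‖φ' x‖)
        = 2 * |k| * (2 * (|k| * ‖φ x‖) * ‖φ' x‖) := by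
      linear_combination (-4) * ‖φ x‖ * ‖φ' x‖ * (_root_.sq_abs k)
    rw [this, hEdef]
    have hEexp : Complex.normSq (φ' x) + k^2 * Complex.normSq (φ x)
        = (‖φ' x‖)^2 + k^2 * (‖φ x‖)^2 := by
      rw [Complex.sq_norm, Complex.sq_norm]
    simp only [hEexp]
    have : (|k| * ‖φ x‖)^2 + (‖φ' x‖)^2
        = (‖φ' x‖)^2 + k^2 * (‖φ x‖)^2 := by
      rw [mul_pow, sq_abs]; ring
    rw [← this]
    exact mul_le_mul_of_nonneg_left h2 (by positivity)
  -- E x ≤ E 0 * exp (2|k| |x|)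
  have key : ∀ x : ℝ, E x ≤ E 0 * Real.exp (2 * |k| * |x|) := by
    intro x
    rcases le_or_gt 0 x with hx | hx
    · -- g y = E y * exp(-(2|k|) y) is antitone
      set g : ℝ → ℝ := fun y => E y * Real.exp (-(2 * |k|) * y) with hgdef
      have hg : ∀ y, HasDerivAt g ((D y - 2 * |k| * E y) * Real.exp (-(2 * |k|) * y)) y := by
        intro y
        have he : HasDerivAt (fun y : ℝ => Real.exp (-(2 * |k|) * y))
            (-(2 * |k|) * Real.exp (-(2 * |k|) * y)) y := by
          have := ((hasDerivAt_id y).const_mul (-(2 * |k|))).exp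
          simpa [mul_comm] using this
        have := (hE y).mul he
        refine this.congr_deriv ?_
        ring
      have hanti : Antitone g := by
        apply antitone_of_deriv_nonpos
        · intro y; exact (hg y).differentiableAt
        · intro y
          rw [(hg y).deriv]
          apply mul_nonpos_of_nonpos_of_nonneg
          · have := hDbound y
            have h1 : D y ≤ 2 * |k| * E y := (abs_le.mp this).2
            linarith
          · exact (Real.exp_pos _).le
      have := hanti hx
      simp only [hgdef, mul_zero, Real.exp_zero, mul_one, neg_mul, neg_zero] at this
      rw [abs_of_nonneg hx]
      have hpos := Real.exp_pos (-(2 * |k| * x))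
      calc E x = E x * Real.exp (-(2 * |k| * x)) * Real.exp (2 * |k| * x) := by
            rw [mul_assoc, ← Real.exp_add]; simp
        _ ≤ E 0 * Real.exp (2 * |k| * x) := by
            apply mul_le_mul_of_nonneg_right _ (Real.exp_pos _).le
            exact this
    · -- h y = E y * exp((2|k|) y) is monotone
      set g : ℝ → ℝ := fun y => E y * Real.exp ((2 * |k|) * y) with hgdef
      have hg : ∀ y, HasDerivAt g ((D y + 2 * |k| * E y) * Real.exp ((2 * |k|) * y)) y := by
        intro y
        have he : HasDerivAt (fun y : ℝ => Real.exp ((2 * |k|) * y))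
            ((2 * |k|) * Real.exp ((2 * |k|) * y)) y := by
          have := ((hasDerivAt_id y).const_mul (2 * |k|)).exp
          simpa [mul_comm] using this
        have := (hE y).mul he
        refine this.congr_deriv ?_
        ring
      have hmono : Monotone g := by
        apply monotone_of_deriv_nonneg
        · intro y; exact (hg y).differentiableAt
        · intro y
          rw [(hg y).deriv]
          apply mul_nonneg _ (Real.exp_pos _).le
          have h1 : -(2 * |k| * E y) ≤ D y := (abs_le.mp (hDbound y)).1
          linarith
      have := hmono hx.le
      simp only [hgdef, mul_zero, Real.exp_zero, mul_one] at this
      rw [abs_of_neg hx]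
      have : E x * Real.exp (2 * |k| * x) ≤ E 0 := this
      calc E x = E x * Real.exp (2 * |k| * x) * Real.exp (2 * |k| * (-x)) := by
            rw [mul_assoc, ← Real.exp_add]; ring_nf; simp
        _ ≤ E 0 * Real.exp (2 * |k| * (-x)) :=
            mul_le_mul_of_nonneg_right this (Real.exp_pos _).le
  refine ⟨Real.sqrt (E 0) / |k| + 1, by positivity, fun x => ?_⟩
  have h1 : k^2 * (‖φ x‖)^2 ≤ E 0 * Real.exp (2 * |k| * |x|) := by
    have := key x
    have h2 : k^2 * Complex.normSq (φ x) ≤ E x := by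
      have := Complex.normSq_nonneg (φ' x); simp [hEdef]; linarith
    rw [Complex.sq_norm]
    linarith
  have h2 : (|k| * ‖φ x‖)^2 ≤ (Real.sqrt (E 0) * Real.exp (|k| * |x|))^2 := by
    rw [mul_pow, mul_pow, _root_.sq_abs, Real.sq_sqrt (hEnonneg 0), ← Real.exp_nat_mul]
    have h4 : ((2:ℕ):ℝ) * (|k| * |x|) = 2 * |k| * |x| := by push_cast; ring
    rw [h4]; exact h1
  have h3 : |k| * ‖φ x‖ ≤ Real.sqrt (E 0) * Real.exp (|k| * |x|) := by
    have ha : 0 ≤ |k| * ‖φ x‖ := by positivity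
    have hb : 0 ≤ Real.sqrt (E 0) * Real.exp (|k| * |x|) := by positivity
    nlinarith [h2]
  have : ‖φ x‖ ≤ Real.sqrt (E 0) / |k| * Real.exp (|k| * |x|) := by
    rw [div_mul_eq_mul_div, le_div_iff₀ hka]
    linarith [h3]
  calc ‖φ x‖ ≤ Real.sqrt (E 0) / |k| * Real.exp (|k| * |x|) := this
    _ ≤ (Real.sqrt (E 0) / |k| + 1) * Real.exp (|k| * |x|) := by
        apply mul_le_mul_of_nonneg_right _ (Real.exp_pos _).le
        linarith
end

section
/- Let γ > 0 with γ ≠ 1, let ν ∈ ℂ and set λ := −ν². Define ψ : ℝ → ℂ² by ψ₁(x) = e^{νx}·((γ − 1)ν − γ·tanh x) and ψ₂(x) = −√γ·e^{νx}/cosh x, and define the matrix potential U(x) = (1/((1 − γ)·cosh²x)) · [[2γ, −2√γ·sinh x],[−2√γ·sinh x, (1 + γ)·cosh²x − 2]]. Then −ψ'' + U(x)ψ = λψ for all x ∈ ℝ. -/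
open Matrix

set_option maxHeartbeats 1600000 in
/-- The explicit vector function
`ψ = (e^{νx}((γ-1)ν - γ tanh x), -√γ e^{νx}/cosh x)` is an eigenfunction with eigenvalue
`λ = -ν²` of the soliton-like matrix Schrödinger operator with potential
`U = (1/((1-γ)cosh²x))·[[2γ, -2√γ sinh x],[-2√γ sinh x, (1+γ)cosh²x - 2]]`. -/
theorem soliton_potential_eigenfunction
    (γ : ℝ) (hγ : 0 < γ) (hγ1 : γ ≠ 1) (ν : ℂ)
    (ψ : ℝ → Fin 2 → ℂ) (U : ℝ → Matrix (Fin 2) (Fin 2) ℂ)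
    (hψ : ∀ x : ℝ, ψ x
        = ![Complex.exp (ν * x) * (((γ : ℂ) - 1) * ν - (γ : ℂ) * (Real.tanh x : ℂ)),
            -((Real.sqrt γ : ℂ)) * Complex.exp (ν * x) / (Real.cosh x : ℂ)])
    (hU : ∀ x : ℝ, U x
        = ((1 : ℂ) / ((1 - (γ : ℂ)) * (Real.cosh x : ℂ) ^ 2)) •
          !![2 * (γ : ℂ), -2 * (Real.sqrt γ : ℂ) * (Real.sinh x : ℂ);
             -2 * (Real.sqrt γ : ℂ) * (Real.sinh x : ℂ),
             (1 + (γ : ℂ)) * (Real.cosh x : ℂ) ^ 2 - 2]) :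
    ∀ (x : ℝ) (i : Fin 2),
      -(deriv (fun t : ℝ => deriv (fun s : ℝ => ψ s i) t) x)
        + ((U x).mulVec (ψ x)) i
      = (-ν ^ 2) * ψ x i := by
  have hcne : ∀ y : ℝ, ((Real.cosh y : ℂ)) ≠ 0 := fun y => by
    exact_mod_cast (Real.cosh_pos y).ne'
  have hid : ∀ y : ℝ, HasDerivAt (fun t : ℝ => (t : ℂ)) 1 y := fun y => by
    simpa using (hasDerivAt_id y).ofReal_comp
  have hlin : ∀ y : ℝ, HasDerivAt (fun t : ℝ => ν * (t : ℂ)) ν y := fun y => by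
    simpa using (hid y).const_mul ν
  have hE : ∀ y : ℝ, HasDerivAt (fun t : ℝ => Complex.exp (ν * (t : ℂ)))
      (Complex.exp (ν * (y : ℂ)) * ν) y := fun y => by
    simpa using (hlin y).cexp
  have hS : ∀ y : ℝ, HasDerivAt (fun t : ℝ => ((Real.sinh t : ℂ)))
      ((Real.cosh y : ℂ)) y := fun y => (Real.hasDerivAt_sinh y).ofReal_comp
  have hC : ∀ y : ℝ, HasDerivAt (fun t : ℝ => ((Real.cosh t : ℂ)))
      ((Real.sinh y : ℂ)) y := fun y => (Real.hasDerivAt_cosh y).ofReal_comp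
  have hA : ∀ y : ℝ, HasDerivAt
      (fun t : ℝ => ((γ : ℂ) - 1) * ν - (γ : ℂ) * ((Real.sinh t : ℂ) / (Real.cosh t : ℂ)))
      (0 - (γ : ℂ) * (((Real.cosh y : ℂ) * (Real.cosh y : ℂ)
          - (Real.sinh y : ℂ) * (Real.sinh y : ℂ)) / (Real.cosh y : ℂ) ^ 2)) y := fun y =>
    (hasDerivAt_const y (((γ : ℂ) - 1) * ν)).sub (((hS y).div (hC y) (hcne y)).const_mul (γ : ℂ))
  have hF0 : ∀ y : ℝ, HasDerivAt
      (fun t : ℝ => Complex.exp (ν * (t : ℂ)) *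
        (((γ : ℂ) - 1) * ν - (γ : ℂ) * ((Real.sinh t : ℂ) / (Real.cosh t : ℂ))))
      (Complex.exp (ν * (y : ℂ)) * ν *
          (((γ : ℂ) - 1) * ν - (γ : ℂ) * ((Real.sinh y : ℂ) / (Real.cosh y : ℂ)))
        + Complex.exp (ν * (y : ℂ)) *
          (0 - (γ : ℂ) * (((Real.cosh y : ℂ) * (Real.cosh y : ℂ)
            - (Real.sinh y : ℂ) * (Real.sinh y : ℂ)) / (Real.cosh y : ℂ) ^ 2))) y := fun y =>
    (hE y).mul (hA y)
  have hF1 : ∀ y : ℝ, HasDerivAt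
      (fun t : ℝ => -((Real.sqrt γ : ℂ)) * Complex.exp (ν * (t : ℂ)) / (Real.cosh t : ℂ))
      ((-((Real.sqrt γ : ℂ)) * (Complex.exp (ν * (y : ℂ)) * ν) * (Real.cosh y : ℂ)
          - -((Real.sqrt γ : ℂ)) * Complex.exp (ν * (y : ℂ)) * (Real.sinh y : ℂ))
        / (Real.cosh y : ℂ) ^ 2) y := fun y =>
    (((hE y).const_mul (-((Real.sqrt γ : ℂ)))).div (hC y) (hcne y))
  intro x
  -- second-derivative data at x
  have hC2 : HasDerivAt (fun t : ℝ => ((Real.cosh t : ℂ)) ^ 2)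
      ((Real.sinh x : ℂ) * (Real.cosh x : ℂ) + (Real.cosh x : ℂ) * (Real.sinh x : ℂ)) x := by
    simpa only [pow_two] using (hC x).fun_mul (hC x)
  have hC2ne : ((Real.cosh x : ℂ)) ^ 2 ≠ 0 := pow_ne_zero 2 (hcne x)
  have hB : HasDerivAt (fun t : ℝ => 0 - (γ:ℂ) * (((Real.cosh t : ℂ) * (Real.cosh t : ℂ)
      - (Real.sinh t : ℂ) * (Real.sinh t : ℂ)) / (Real.cosh t : ℂ) ^ 2))
      (0 - (γ:ℂ) * ((((Real.sinh x:ℂ) * (Real.cosh x:ℂ) + (Real.cosh x:ℂ) * (Real.sinh x:ℂ)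
          - ((Real.cosh x:ℂ) * (Real.sinh x:ℂ) + (Real.sinh x:ℂ) * (Real.cosh x:ℂ)))
            * (Real.cosh x:ℂ) ^ 2
        - ((Real.cosh x:ℂ) * (Real.cosh x:ℂ) - (Real.sinh x:ℂ) * (Real.sinh x:ℂ))
            * ((Real.sinh x : ℂ) * (Real.cosh x : ℂ) + (Real.cosh x : ℂ) * (Real.sinh x : ℂ)))
        / ((Real.cosh x:ℂ) ^ 2) ^ 2)) x :=
    (hasDerivAt_const x (0:ℂ)).sub (((((hC x).mul (hC x)).sub ((hS x).mul (hS x))).div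
      hC2 hC2ne).const_mul (γ:ℂ))
  have hdd0 := (((hE x).mul_const ν).fun_mul (hA x)).fun_add ((hE x).fun_mul hB)
  have hdd1 := (((((hE x).mul_const ν).const_mul (-((Real.sqrt γ : ℂ)))).fun_mul (hC x)).fun_sub
        (((hE x).const_mul (-((Real.sqrt γ : ℂ)))).fun_mul (hS x))).fun_div hC2 hC2ne
  -- identify the inner functions with ψ components
  have htanh : ∀ y : ℝ, ((Real.tanh y : ℝ) : ℂ) = (Real.sinh y : ℂ) / (Real.cosh y : ℂ) := by
    intro y; rw [Real.tanh_eq_sinh_div_cosh]; push_cast; ring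
  have hψ0 : (fun s : ℝ => ψ s 0) = (fun t : ℝ => Complex.exp (ν * (t : ℂ)) *
      (((γ : ℂ) - 1) * ν - (γ : ℂ) * ((Real.sinh t : ℂ) / (Real.cosh t : ℂ)))) := by
    funext s; rw [hψ s]; simp [htanh s]
  have hψ1 : (fun s : ℝ => ψ s 1) = (fun t : ℝ =>
      -((Real.sqrt γ : ℂ)) * Complex.exp (ν * (t : ℂ)) / (Real.cosh t : ℂ)) := by
    funext s; rw [hψ s]; simp
  have e0 : (fun t : ℝ => deriv (fun s : ℝ => ψ s 0) t)
      = (fun y : ℝ => Complex.exp (ν * (y : ℂ)) * ν *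
          (((γ : ℂ) - 1) * ν - (γ : ℂ) * ((Real.sinh y : ℂ) / (Real.cosh y : ℂ)))
        + Complex.exp (ν * (y : ℂ)) *
          (0 - (γ : ℂ) * (((Real.cosh y : ℂ) * (Real.cosh y : ℂ)
            - (Real.sinh y : ℂ) * (Real.sinh y : ℂ)) / (Real.cosh y : ℂ) ^ 2))) := by
    funext t; rw [hψ0]; exact (hF0 t).deriv
  have e1 : (fun t : ℝ => deriv (fun s : ℝ => ψ s 1) t)
      = (fun y : ℝ => (-((Real.sqrt γ : ℂ)) * (Complex.exp (ν * (y : ℂ)) * ν) * (Real.cosh y : ℂ)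
          - -((Real.sqrt γ : ℂ)) * Complex.exp (ν * (y : ℂ)) * (Real.sinh y : ℂ))
        / (Real.cosh y : ℂ) ^ 2) := by
    funext t; rw [hψ1]; exact (hF1 t).deriv
  -- algebraic identities
  have hcs : ((Real.cosh x : ℂ)) ^ 2 - ((Real.sinh x : ℂ)) ^ 2 = 1 := by
    have := Real.cosh_sq_sub_sinh_sq x; exact_mod_cast congrArg (Complex.ofReal) this
  have hg : ((Real.sqrt γ : ℂ)) * ((Real.sqrt γ : ℂ)) = (γ : ℂ) := by
    have : Real.sqrt γ * Real.sqrt γ = γ := Real.mul_self_sqrt hγ.le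
    exact_mod_cast congrArg (Complex.ofReal) this
  have h1γ : (1 : ℂ) - (γ : ℂ) ≠ 0 := by
    intro h; apply hγ1; have : (γ : ℂ) = 1 := by linear_combination -h
    exact_mod_cast this
  have hw0 : Complex.exp (x : ℂ) ≠ 0 := Complex.exp_ne_zero _
  have hcw : ((Real.cosh x : ℝ) : ℂ)
      = (Complex.exp (x : ℂ) * Complex.exp (x : ℂ) + 1) / (2 * Complex.exp (x : ℂ)) := by
    rw [Real.cosh_eq]; push_cast
    rw [Complex.exp_neg, div_eq_div_iff two_ne_zero (mul_ne_zero two_ne_zero hw0)]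
    field_simp
  have hsw : ((Real.sinh x : ℝ) : ℂ)
      = (Complex.exp (x : ℂ) * Complex.exp (x : ℂ) - 1) / (2 * Complex.exp (x : ℂ)) := by
    rw [Real.sinh_eq]; push_cast
    rw [Complex.exp_neg, div_eq_div_iff two_ne_zero (mul_ne_zero two_ne_zero hw0)]
    field_simp
  have hw1 : Complex.exp (x : ℂ) * Complex.exp (x : ℂ) + 1 ≠ 0 := by
    intro h; apply hcne x; rw [hcw, h, zero_div]
  have h1g : (1 : ℂ) - (Real.sqrt γ : ℂ) * (Real.sqrt γ : ℂ) ≠ 0 := by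
    rw [hg]; exact h1γ
  have hcc : Complex.cosh (x : ℂ) ≠ 0 := by rw [← Complex.ofReal_cosh]; exact hcne x
  have h1 : ((Real.cosh x : ℂ)) * ((Real.cosh x : ℂ))
      - ((Real.sinh x : ℂ)) * ((Real.sinh x : ℂ)) = 1 := by linear_combination hcs
  have h2 : (1 + (γ : ℂ)) * ((Real.cosh x : ℂ)) ^ 2 - 2
      = ((γ : ℂ) - 1) * ((Real.cosh x : ℂ)) ^ 2 + 2 * ((Real.sinh x : ℂ)) ^ 2 := by
    linear_combination 2 * hcs
  intro i
  fin_cases i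
  · show -(deriv (fun t : ℝ => deriv (fun s : ℝ => ψ s 0) t) x) + _ = _
    rw [e0, hdd0.deriv, hU, hψ]
    simp only [Matrix.mulVec, dotProduct, Fin.sum_univ_two, Matrix.smul_apply,
      Matrix.cons_val', Matrix.cons_val_zero, Matrix.cons_val_one, Matrix.head_cons,
      Matrix.head_fin_const, Matrix.of_apply, Matrix.cons_val_fin_one, smul_eq_mul,
      Fin.zero_eta, Fin.mk_one]
    rw [htanh x]
    rw [h1, ← hg]
    field_simp [hcne x, hcc, h1g]
    have h1g2 : (1 : ℂ) - (Real.sqrt γ : ℂ) ^ 2 ≠ 0 := by rw [pow_two]; exact h1g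
    field_simp
    ring
  · show -(deriv (fun t : ℝ => deriv (fun s : ℝ => ψ s 1) t) x) + _ = _
    rw [e1, hdd1.deriv, hU, hψ]
    simp only [Matrix.mulVec, dotProduct, Fin.sum_univ_two, Matrix.smul_apply,
      Matrix.cons_val', Matrix.cons_val_zero, Matrix.cons_val_one, Matrix.head_cons,
      Matrix.head_fin_const, Matrix.of_apply, Matrix.cons_val_fin_one, smul_eq_mul,
      Fin.zero_eta, Fin.mk_one]
    rw [htanh x]
    rw [h2, ← hg]
    field_simp [hcne x, hcc, h1g]
    have h1g2 : (1 : ℂ) - (Real.sqrt γ : ℂ) ^ 2 ≠ 0 := by rw [pow_two]; exact h1g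
    field_simp
    ring
end

section
/- Let d ≥ 1, let C ∈ M_d(ℂ) be a constant invertible matrix, and let V : ℝ → M_d(ℂ) be twice differentiable satisfying V''·C⁻¹ + C⁻¹·V'' = 2[V', [V, C⁻¹]]. Then the functions F := CVC⁻¹ − V and B := CV'C⁻¹ + V' − F² satisfy the period-one matrix dressing chain with α = 0: CF' + F'C = [C, F² + B] and B' = [B, F]. -/
open Matrix

private lemma hasDerivAt_matMul {d : ℕ} {W U : ℝ → Matrix (Fin d) (Fin d) ℂ}
    {W' U' : Matrix (Fin d) (Fin d) ℂ} {x : ℝ}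
    (hW : ∀ i j, HasDerivAt (fun t => W t i j) (W' i j) x)
    (hU : ∀ i j, HasDerivAt (fun t => U t i j) (U' i j) x) (i j : Fin d) :
    HasDerivAt (fun t => (W t * U t) i j) ((W' * U x + W x * U') i j) x := by
  simp only [Matrix.mul_apply, Matrix.add_apply]
  rw [← Finset.sum_add_distrib]
  exact HasDerivAt.fun_sum fun k _ => (hW i k).mul (hU k j)

private lemma hasDerivAt_constMulMul {d : ℕ} {V : ℝ → Matrix (Fin d) (Fin d) ℂ}
    {V' A B : Matrix (Fin d) (Fin d) ℂ} {x : ℝ}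
    (hV : ∀ i j, HasDerivAt (fun t => V t i j) (V' i j) x) (i j : Fin d) :
    HasDerivAt (fun t => (A * V t * B) i j) ((A * V' * B) i j) x := by
  have hA : ∀ i j : Fin d, HasDerivAt (fun _ : ℝ => A i j) ((0 : Matrix (Fin d) (Fin d) ℂ) i j) x := by
    intro i j; simpa using hasDerivAt_const x (A i j)
  have hB : ∀ i j : Fin d, HasDerivAt (fun _ : ℝ => B i j) ((0 : Matrix (Fin d) (Fin d) ℂ) i j) x := by
    intro i j; simpa using hasDerivAt_const x (B i j)
  have h1 : ∀ i j, HasDerivAt (fun t => (A * V t) i j) ((A * V') i j) x := by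
    intro i j
    have := hasDerivAt_matMul (W := fun _ => A) (U := V) hA hV i j
    simpa using this
  have := hasDerivAt_matMul (W := fun t => A * V t) (U := fun _ => B) h1 hB i j
  simpa using this

/-- If `V'' C⁻¹ + C⁻¹ V'' = 2[V', [V, C⁻¹]]` with `C` invertible, then
`F = CVC⁻¹ - V` and `B = CV'C⁻¹ + V' - F²` satisfy the period-one matrix dressing chain
with `α = 0`: `CF' + F'C = [C, F² + B]` and `B' = [B, F]`. Derivatives entrywise. -/
theorem potential_form_reduction_solves_dressing_chain
    (d : ℕ) (hd : 1 ≤ d)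
    (C : Matrix (Fin d) (Fin d) ℂ) (hC : IsUnit C)
    (V V' V'' : ℝ → Matrix (Fin d) (Fin d) ℂ)
    (hV : ∀ x i j, HasDerivAt (fun t => V t i j) (V' x i j) x)
    (hV' : ∀ x i j, HasDerivAt (fun t => V' t i j) (V'' x i j) x)
    (heq : ∀ x, V'' x * C⁻¹ + C⁻¹ * V'' x
        = (2 : ℂ) • (V' x * (V x * C⁻¹ - C⁻¹ * V x)
            - (V x * C⁻¹ - C⁻¹ * V x) * V' x)) :
    ∀ F' B' : ℝ → Matrix (Fin d) (Fin d) ℂ,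
      (∀ x i j, HasDerivAt (fun t => (C * V t * C⁻¹ - V t) i j) (F' x i j) x) →
      (∀ x i j, HasDerivAt
        (fun t => (C * V' t * C⁻¹ + V' t - (C * V t * C⁻¹ - V t) ^ 2) i j)
        (B' x i j) x) →
      ∀ x,
        (C * F' x + F' x * C
          = C * ((C * V x * C⁻¹ - V x) ^ 2
              + (C * V' x * C⁻¹ + V' x - (C * V x * C⁻¹ - V x) ^ 2))
            - ((C * V x * C⁻¹ - V x) ^ 2
              + (C * V' x * C⁻¹ + V' x - (C * V x * C⁻¹ - V x) ^ 2)) * C)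
        ∧ B' x
          = (C * V' x * C⁻¹ + V' x - (C * V x * C⁻¹ - V x) ^ 2)
              * (C * V x * C⁻¹ - V x)
            - (C * V x * C⁻¹ - V x)
              * (C * V' x * C⁻¹ + V' x - (C * V x * C⁻¹ - V x) ^ 2) := by
  intro F' B' hF hB x
  have hdet : IsUnit C.det := (Matrix.isUnit_iff_isUnit_det C).mp hC
  have hCi : C * C⁻¹ = 1 := Matrix.mul_nonsing_inv C hdet
  have hiC : C⁻¹ * C = 1 := Matrix.nonsing_inv_mul C hdet
  -- compute F'
  have hFd : ∀ y i j, HasDerivAt (fun t => (C * V t * C⁻¹ - V t) i j)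
      ((C * V' y * C⁻¹ - V' y) i j) y := by
    intro y i j
    simp only [Matrix.sub_apply]
    exact (hasDerivAt_constMulMul (hV y) i j).sub (hV y i j)
  have hF'eq : F' x = C * V' x * C⁻¹ - V' x := by
    ext i j; exact (hF x i j).unique (hFd x i j)
  -- compute B'
  have hGd : ∀ i j, HasDerivAt
      (fun t => (C * V' t * C⁻¹ + V' t - (C * V t * C⁻¹ - V t) ^ 2) i j)
      ((C * V'' x * C⁻¹ + V'' x
        - ((C * V' x * C⁻¹ - V' x) * (C * V x * C⁻¹ - V x)
           + (C * V x * C⁻¹ - V x) * (C * V' x * C⁻¹ - V' x))) i j) x := by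
    intro i j
    simp only [Matrix.sub_apply, Matrix.add_apply, sq]
    refine HasDerivAt.sub (HasDerivAt.add ?_ (hV' x i j)) ?_
    · exact hasDerivAt_constMulMul (hV' x) i j
    · have := hasDerivAt_matMul (W := fun t => C * V t * C⁻¹ - V t)
        (U := fun t => C * V t * C⁻¹ - V t)
        (W' := C * V' x * C⁻¹ - V' x) (U' := C * V' x * C⁻¹ - V' x)
        (hFd x) (hFd x) i j
      simpa only [Matrix.add_apply] using this
  have hB'eq : B' x = C * V'' x * C⁻¹ + V'' x
        - ((C * V' x * C⁻¹ - V' x) * (C * V x * C⁻¹ - V x)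
           + (C * V x * C⁻¹ - V x) * (C * V' x * C⁻¹ - V' x)) := by
    ext i j; exact (hB x i j).unique (hGd i j)
  constructor
  · rw [hF'eq]
    simp only [mul_add, add_mul, mul_sub, sub_mul, mul_assoc, hiC, hCi, mul_one, one_mul,
      Matrix.mul_nonsing_inv_cancel_right _ _ hdet, Matrix.nonsing_inv_mul_cancel_right _ _ hdet]
    abel
  · have key := congrArg (fun M => C * M) (heq x)
    simp only [mul_add, ← mul_assoc, hCi, one_mul, Matrix.mul_smul, mul_sub] at key
    rw [hB'eq, key]
    simp only [two_smul, mul_add, add_mul, mul_sub, sub_mul, mul_assoc, hiC, hCi, mul_one,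
      one_mul, sq, Matrix.mul_nonsing_inv_cancel_left _ _ hdet,
      Matrix.nonsing_inv_mul_cancel_left _ _ hdet]
    abel
end
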